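/- arXiv:1503.01207 — 7 statements merged into one kernel-verified Lean document; each statement's English description precedes it below -/
import Mathlib

section
/- Let G be a finite abelian group with dual group Ĝ. Then the convex hull (in ℂ^{Ĝ} viewed as a real vector space) of the set {(χ(x))_{χ∈Ĝ} : x ∈ G} equals the set {ℓ ∈ ℂ^{Ĝ} : ℓ_{1_Ĝ} = 1 and the matrix M(ℓ) = [ℓ_{χ⁻¹χ'}]_{χ,χ'∈Ĝ} is Hermitian positive semidefinite}. -/
/-!
Each evaluation vector `(χ x)_χ` has the rank-one moment matrix `vᴴ v` with `v = (χ x)_χ`, and the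
conditions `ℓ 1 = 1`, `M(ℓ) ⪰ 0` cut out a convex set, so the convex hull lies inside it.
Conversely, testing `M(ℓ) ⪰ 0` against the character `ψ ↦ ψ x⁻¹` of `Ĝ` shows that the Fourier
transform `ℓ̂ x = ∑ ψ, ℓ ψ * ψ x⁻¹` is nonnegative, and Fourier inversion on `G` writes `ℓ` as
`∑ x, (ℓ̂ x / |G|) • (χ x)_χ`, whose weights sum to `ℓ 1 = 1`.
-/

open scoped Classical ComplexOrder

noncomputable instance dualFintype (G : Type*) [CommGroup G] [Fintype G] :
    Fintype (G →* ℂˣ) := by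
  haveI : NeZero ((Monoid.exponent G : ℂ)) :=
    ⟨by exact_mod_cast Monoid.exponent_ne_zero_of_finite⟩
  exact Fintype.ofEquiv G
    (CommGroup.monoidHom_mulEquiv_of_hasEnoughRootsOfUnity G ℂ).some.symm.toEquiv

open Matrix

def momentMatrix {H R : Type*} [Group H] (ℓ : H → R) : Matrix H H R :=
  Matrix.of fun a b => ℓ (a⁻¹ * b)

section UnitaryCharacter

variable {H : Type*} [Group H]

lemma norm_units_val_apply [Finite H] (φ : H →* ℂˣ) (h : H) : ‖(φ h : ℂ)‖ = 1 := by
  refine Complex.norm_eq_one_of_pow_eq_one (n := Nat.card H) ?_ Nat.card_pos.ne'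
  rw [← Units.val_pow_eq_pow_val, ← map_pow, pow_card_eq_one', map_one, Units.val_one]

lemma star_units_val_apply [Finite H] (φ : H →* ℂˣ) (h : H) : star (φ h : ℂ) = φ h⁻¹ := by
  rw [map_inv, Units.val_inv_eq_inv_val, Complex.inv_eq_conj (norm_units_val_apply φ h)]
  rfl

lemma star_units_val_mul_self [Finite H] (φ : H →* ℂˣ) (h : H) : star (φ h : ℂ) * φ h = 1 := by
  rw [star_units_val_apply, ← Units.val_mul, ← map_mul, inv_mul_cancel, map_one, Units.val_one]

variable [Fintype H]

lemma sum_units_val_apply_eq_zero {φ : H →* ℂˣ} (hφ : φ ≠ 1) :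
    ∑ h, (φ h : ℂ) = 0 :=
  sum_hom_units_eq_zero ((Units.coeHom ℂ).comp φ) fun h1 =>
    hφ <| MonoidHom.ext fun h => Units.ext <| DFunLike.congr_fun h1 h

lemma posSemidef_momentMatrix_units_val (φ : H →* ℂˣ) :
    (momentMatrix fun h => (φ h : ℂ)).PosSemidef := by
  convert posSemidef_vecMulVec_star_self fun h => (φ h : ℂ) using 1
  ext a b
  simp [momentMatrix, vecMulVec_apply, star_units_val_apply]

lemma star_dotProduct_momentMatrix_mulVec_units_val (ℓ : H → ℂ) (φ : H →* ℂˣ) :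
    star (fun h => (φ h : ℂ)) ⬝ᵥ momentMatrix ℓ *ᵥ (fun h => (φ h : ℂ)) =
      Fintype.card H * ∑ h, ℓ h * φ h := by
  have row (a : H) : ∑ b, ℓ (a⁻¹ * b) * φ b = φ a * ∑ h, ℓ h * φ h := by
    rw [Finset.mul_sum]
    refine Fintype.sum_equiv (Equiv.mulLeft a⁻¹) _ _ fun b => ?_
    simp only [Equiv.coe_mulLeft, map_mul, map_inv, Units.val_mul]
    rw [mul_left_comm, ← mul_assoc (φ a : ℂ), Units.mul_inv, one_mul]
  simp only [dotProduct, mulVec, Pi.star_apply, momentMatrix, of_apply, row, ← mul_assoc,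
    star_units_val_mul_self, one_mul, Finset.sum_const, Finset.card_univ, nsmul_eq_mul]

lemma Matrix.PosSemidef.sum_mul_units_val_nonneg {ℓ : H → ℂ} (hℓ : (momentMatrix ℓ).PosSemidef)
    (φ : H →* ℂˣ) : 0 ≤ ∑ h, ℓ h * φ h := by
  have := hℓ.dotProduct_mulVec_nonneg fun h => (φ h : ℂ)
  rw [star_dotProduct_momentMatrix_mulVec_units_val] at this
  exact le_of_mul_le_mul_left (by rwa [mul_zero]) (Nat.cast_pos.mpr (Fintype.card_pos (α := H)))

end UnitaryCharacter

lemma convex_setOf_posSemidef_momentMatrix {H : Type*} [Group H] :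
    Convex ℝ {ℓ : H → ℂ | ℓ 1 = 1 ∧ (momentMatrix ℓ).PosSemidef} := by
  rintro ℓ₁ ⟨h₁, hM₁⟩ ℓ₂ ⟨h₂, hM₂⟩ a b ha hb hab
  refine ⟨?_, (hM₁.smul ha).add (hM₂.smul hb)⟩
  simp [h₁, h₂, ← Complex.ofReal_add, hab]

section DualGroup

variable {G : Type*} [CommGroup G] [Fintype G]

noncomputable def dualFourier (ℓ : (G →* ℂˣ) → ℂ) (x : G) : ℂ :=
  ∑ ψ, ℓ ψ * ψ x⁻¹

lemma Matrix.PosSemidef.dualFourier_nonneg {ℓ : (G →* ℂˣ) → ℂ}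
    (hℓ : (momentMatrix ℓ).PosSemidef) (x : G) : 0 ≤ dualFourier ℓ x :=
  hℓ.sum_mul_units_val_nonneg (MonoidHom.eval x⁻¹)

lemma sum_dualFourier_mul_units_val (ℓ : (G →* ℂˣ) → ℂ) (χ : G →* ℂˣ) :
    ∑ x, dualFourier ℓ x * χ x = Fintype.card G * ℓ χ := by
  have orth (ψ : G →* ℂˣ) :
      ∑ x, (ψ x⁻¹ * χ x : ℂ) = if ψ = χ then (Fintype.card G : ℂ) else 0 := by
    simp only [map_inv, ← Units.val_mul, ← MonoidHom.mul_apply, ← MonoidHom.inv_apply]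
    split_ifs with h
    · simp [h]
    · exact sum_units_val_apply_eq_zero fun h' => h (inv_mul_eq_one.mp h')
  simp only [dualFourier, Finset.sum_mul, mul_assoc]
  rw [Finset.sum_comm]
  simp only [← Finset.mul_sum, orth, mul_ite, mul_zero, Finset.sum_ite_eq', Finset.mem_univ,
    if_true]
  exact mul_comm _ _

lemma mem_convexHull_range_of_posSemidef_momentMatrix {ℓ : (G →* ℂˣ) → ℂ} (h1 : ℓ 1 = 1)
    (hℓ : (momentMatrix ℓ).PosSemidef) :
    ℓ ∈ convexHull ℝ (Set.range fun x (χ : G →* ℂˣ) => (χ x : ℂ)) := by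
  set w : G → ℝ := fun x => (dualFourier ℓ x).re / Fintype.card G
  have hw (x : G) : (w x : ℂ) = dualFourier ℓ x / Fintype.card G := by
    rw [Complex.ofReal_div, ← Complex.eq_re_of_ofReal_le (hℓ.dualFourier_nonneg x)]
    push_cast
    rfl
  have hw_nonneg (x : G) : 0 ≤ w x :=
    Complex.zero_le_real.mp (hw x ▸ div_nonneg (hℓ.dualFourier_nonneg x) (Nat.cast_nonneg _))
  have hℓ_eq : ∑ x, w x • (fun χ : G →* ℂˣ => (χ x : ℂ)) = ℓ := by
    funext χ
    have hcard : (Fintype.card G : ℂ) ≠ 0 := Nat.cast_ne_zero.mpr Fintype.card_ne_zero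
    simp only [Finset.sum_apply, Pi.smul_apply, Complex.real_smul, hw, div_mul_eq_mul_div,
      ← Finset.sum_div, sum_dualFourier_mul_units_val]
    field_simp
  have hw_sum : ∑ x, w x = 1 := by
    have := congr_fun hℓ_eq 1
    simp only [Finset.sum_apply, Pi.smul_apply, MonoidHom.one_apply, Units.val_one,
      Complex.real_smul, mul_one, h1] at this
    exact_mod_cast this
  rw [← hℓ_eq]
  exact (convex_convexHull ℝ _).sum_mem (fun x _ => hw_nonneg x) hw_sum
    fun x _ => subset_convexHull ℝ _ ⟨x, rfl⟩

end DualGroup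

/-- **Bochner-type description of the full moment polytope.** The convex hull (in `ℂ^Ĝ`
viewed as a real vector space) of the vectors `(χ(x))_{χ ∈ Ĝ}`, for `x ∈ G`, equals the
set of `ℓ ∈ ℂ^Ĝ` with `ℓ(1) = 1` whose moment matrix `[ℓ(χ⁻¹χ')]_{χ,χ'}` is Hermitian
positive semidefinite. -/
theorem moment_polytope_full
    (G : Type*) [CommGroup G] [Fintype G] :
    convexHull ℝ {ℓ : (G →* ℂˣ) → ℂ | ∃ x : G, ℓ = fun χ => ((χ x : ℂˣ) : ℂ)} =
    {ℓ : (G →* ℂˣ) → ℂ | ℓ 1 = 1 ∧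
      (Matrix.of fun χ χ' : G →* ℂˣ => ℓ (χ⁻¹ * χ')).PosSemidef} := by
  refine le_antisymm (convexHull_min ?_ (convex_setOf_posSemidef_momentMatrix (H := G →* ℂˣ))) ?_
  · rintro _ ⟨x, rfl⟩
    exact ⟨by simp, posSemidef_momentMatrix_units_val (MonoidHom.eval x)⟩
  · rintro ℓ ⟨h1, hℓ⟩
    refine convexHull_mono ?_ (mem_convexHull_range_of_posSemidef_momentMatrix h1 hℓ)
    rintro _ ⟨x, rfl⟩
    exact ⟨x, rfl⟩
end

section
/- Let G be a finite abelian group with dual group Ĝ and let S ⊆ Ĝ be symmetric. Then the moment polytope M(G,S) equals the set of all ℓ ∈ ℂ^S for which there exists a Hermitian positive semidefinite matrix Y, with rows and columns indexed by Ĝ, such that Y_{χ,χ} = 1 for all χ ∈ Ĝ and Y_{χ,χ'} = ℓ_{χ⁻¹χ'} whenever χ⁻¹χ' ∈ S. -/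
/-!
A point `x ∈ G` is completed by the rank-one matrix `Y χ χ' = conj (χ x) · χ' x = (χ⁻¹χ') x`,
and the completable vectors form a convex set. Conversely, evaluate the quadratic form of a
completion `Y` at the vectors `(conj (χ x))_χ`: this gives nonnegative weights on `G` whose Fourier
coefficient at `σ` is, by the orthogonality relations, the average of `Y` along the "diagonal"
`χ ↦ Y χ (χσ)`. That average is `1` for `σ = 1` and `ℓ σ` for `σ ∈ S`, so `ℓ` is the barycentre
of the points `(χ x)_χ` with these weights.
-/

open scoped Classical ComplexOrder

open Matrix

section Completion

variable {H : Type*} [Group H]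

def psdCompletions (S : Set H) : Set (S → ℂ) :=
  {ℓ | ∃ Y : Matrix H H ℂ, Y.PosSemidef ∧ (∀ g, Y g g = 1) ∧
    ∀ (g g' : H) (h : g⁻¹ * g' ∈ S), Y g g' = ℓ ⟨g⁻¹ * g', h⟩}

theorem convex_psdCompletions (S : Set H) : Convex ℝ (psdCompletions S) := by
  rintro ℓ₁ ⟨Y₁, hY₁, hdiag₁, hℓ₁⟩ ℓ₂ ⟨Y₂, hY₂, hdiag₂, hℓ₂⟩ a b ha hb hab
  refine ⟨a • Y₁ + b • Y₂, (hY₁.smul ha).add (hY₂.smul hb), fun g => ?_, fun g g' h => ?_⟩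
  · simp only [Matrix.add_apply, Matrix.smul_apply, hdiag₁, hdiag₂]
    rw [← add_smul, hab, one_smul]
  · simp [hℓ₁ g g' h, hℓ₂ g g' h]

end Completion

theorem conj_apply_eq_inv_apply {G : Type*} [Group G] [Finite G] (χ : G →* ℂˣ) (x : G) :
    starRingEnd ℂ (χ x) = ((χ⁻¹ x : ℂˣ) : ℂ) := by
  have hpow : ((χ x : ℂˣ) : ℂ) ^ orderOf x = 1 := by
    rw [← Units.val_pow_eq_pow_val, ← map_pow, pow_orderOf_eq_one, map_one, Units.val_one]
  rw [MonoidHom.inv_apply, Units.val_inv_eq_inv_val,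
    Complex.inv_eq_conj (Complex.norm_eq_one_of_pow_eq_one hpow (orderOf_pos x).ne')]

theorem sum_apply_units {G : Type*} [Group G] [Fintype G] (τ : G →* ℂˣ) :
    ∑ x, ((τ x : ℂˣ) : ℂ) = if τ = 1 then (Fintype.card G : ℂ) else 0 := by
  have hcoe : (Units.coeHom ℂ).comp τ = 1 ↔ τ = 1 :=
    ⟨fun h => MonoidHom.ext fun x => Units.ext (DFunLike.congr_fun h x), fun h => by simp [h]⟩
  simpa [hcoe] using sum_hom_units ((Units.coeHom ℂ).comp τ)

section Dual

variable {G : Type*} [CommGroup G] [Fintype G]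

theorem card_dual : Fintype.card (G →* ℂˣ) = Fintype.card G := by
  have : NeZero ((Monoid.exponent G : ℂ)) :=
    ⟨by exact_mod_cast Monoid.exponent_ne_zero_of_finite⟩
  simpa [Nat.card_eq_fintype_card] using
    CommGroup.card_monoidHom_of_hasEnoughRootsOfUnity G ℂ

def charEval (x : G) : (G →* ℂˣ) → ℂ := fun χ => χ x

theorem star_charEval (x : G) : star (charEval x) = fun χ => ((χ⁻¹ x : ℂˣ) : ℂ) :=
  funext fun χ => conj_apply_eq_inv_apply χ x

theorem sum_quadForm_star_charEval_mul_apply (Y : Matrix (G →* ℂˣ) (G →* ℂˣ) ℂ)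
    (σ : G →* ℂˣ) :
    ∑ x, (charEval x ⬝ᵥ Y *ᵥ star (charEval x)) * σ x
      = Fintype.card G * ∑ χ, Y χ (χ * σ) := by
  have horth : ∀ χ χ' : G →* ℂˣ, ∑ x, (((χ * χ'⁻¹ * σ) x : ℂˣ) : ℂ)
      = if χ' = χ * σ then (Fintype.card G : ℂ) else 0 := by
    intro χ χ'
    rw [sum_apply_units]
    exact if_congr (by rw [mul_right_comm (G := G →* ℂˣ), mul_inv_eq_one (G := G →* ℂˣ), eq_comm])
      rfl rfl
  calc ∑ x, (charEval x ⬝ᵥ Y *ᵥ star (charEval x)) * σ x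
      = ∑ χ, ∑ χ', Y χ χ' * ∑ x, (((χ * χ'⁻¹ * σ) x : ℂˣ) : ℂ) := by
        simp only [star_charEval, dotProduct, mulVec, charEval, Finset.sum_mul, Finset.mul_sum,
          MonoidHom.mul_apply, MonoidHom.inv_apply, Units.val_mul, Units.val_inv_eq_inv_val]
        rw [Finset.sum_comm]
        refine Finset.sum_congr rfl fun χ _ => ?_
        rw [Finset.sum_comm]
        exact Finset.sum_congr rfl fun χ' _ => Finset.sum_congr rfl fun x _ => by ring
    _ = Fintype.card G * ∑ χ, Y χ (χ * σ) := by
        simp only [horth, mul_ite, mul_zero, Finset.sum_ite_eq', Finset.mem_univ, if_true,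
          Finset.mul_sum, mul_comm]

theorem charEval_mem_psdCompletions (S : Set (G →* ℂˣ)) (x : G) :
    (fun χ : S => charEval x χ) ∈ psdCompletions S := by
  have hY : ∀ χ χ',
      vecMulVec (star (charEval x)) (charEval x) χ χ' = (((χ⁻¹ * χ') x : ℂˣ) : ℂ) := by
    intro χ χ'
    simp [vecMulVec_apply, star_charEval, charEval]
  refine ⟨_, posSemidef_vecMulVec_star_self (charEval x), fun χ => ?_, fun χ χ' _ => hY χ χ'⟩
  simp [hY]

theorem psdCompletions_subset_convexHull (S : Set (G →* ℂˣ)) :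
    psdCompletions S ⊆ convexHull ℝ {ℓ | ∃ x : G, ℓ = fun χ : S => charEval x χ} := by
  rintro ℓ ⟨Y, hY, hdiag, hℓ⟩
  set q : G → ℂ := fun x => charEval x ⬝ᵥ Y *ᵥ star (charEval x)
  have hq : ∀ x, 0 ≤ q x := fun x => by
    simpa [q] using hY.dotProduct_mulVec_nonneg (star (charEval x))
  set w : G → ℝ := fun x => (q x).re / Fintype.card G ^ 2
  have hw : ∀ x, (w x : ℂ) = q x / Fintype.card G ^ 2 := fun x => by
    simp only [w]
    push_cast
    rw [← Complex.eq_re_of_ofReal_le (r := 0) (by simpa using hq x)]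
  have hfourier : ∀ σ c, (∀ χ, Y χ (χ * σ) = c) → ∑ x, (w x : ℂ) * σ x = c := by
    intro σ c h
    simp only [hw, div_mul_eq_mul_div, ← Finset.sum_div, q, sum_quadForm_star_charEval_mul_apply,
      Finset.sum_congr rfl fun χ _ => h χ, Finset.sum_const, Finset.card_univ, card_dual,
      nsmul_eq_mul]
    field_simp
  refine mem_convexHull_of_exists_fintype w (fun x χ => charEval x χ)
    (fun x => div_nonneg (Complex.nonneg_iff.mp (hq x)).1 (by positivity)) ?_
    (fun x => ⟨x, rfl⟩) ?_
  · have hsum := hfourier 1 1 fun χ => by rw [mul_one (M := G →* ℂˣ)]; exact hdiag χ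
    simp only [MonoidHom.one_apply, Units.val_one, mul_one] at hsum
    exact_mod_cast hsum
  · funext σ
    have := hfourier σ (ℓ σ) fun χ => by
      rw [hℓ χ (χ * σ) (by simp)]
      exact congrArg ℓ (Subtype.ext (inv_mul_cancel_left χ σ))
    simpa [Complex.real_smul, charEval] using this

end Dual

theorem moment_polytope_unstructured_general
    (G : Type*) [CommGroup G] [Fintype G]
    (S : Set (G →* ℂˣ)) :
    convexHull ℝ {ℓ : ↥S → ℂ | ∃ x : G, ℓ = fun χ : ↥S => (((χ : G →* ℂˣ) x : ℂˣ) : ℂ)} =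
    {ℓ : ↥S → ℂ | ∃ Y : Matrix (G →* ℂˣ) (G →* ℂˣ) ℂ, Y.PosSemidef ∧
      (∀ χ : G →* ℂˣ, Y χ χ = 1) ∧
      ∀ (χ χ' : G →* ℂˣ) (h : χ⁻¹ * χ' ∈ S), Y χ χ' = ℓ ⟨χ⁻¹ * χ', h⟩} :=
  subset_antisymm
    (convexHull_min (fun _ ⟨x, hx⟩ => hx ▸ charEval_mem_psdCompletions S x)
      (convex_psdCompletions S))
    (psdCompletions_subset_convexHull S)

/-- **Moment polytope via unstructured PSD matrix completion.** For a symmetric subset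
`S` of the dual group, the moment polytope `M(G,S) = conv{(χ(x))_{χ∈S} : x ∈ G}` equals
the set of `ℓ ∈ ℂ^S` that can be completed to a Hermitian positive semidefinite matrix
`Y`, indexed by `Ĝ`, with unit diagonal and `Y_{χ,χ'} = ℓ_{χ⁻¹χ'}` whenever
`χ⁻¹χ' ∈ S`. -/
theorem moment_polytope_unstructured
    (G : Type*) [CommGroup G] [Fintype G]
    (S : Set (G →* ℂˣ)) (hS : ∀ χ ∈ S, χ⁻¹ ∈ S) :
    convexHull ℝ {ℓ : ↥S → ℂ | ∃ x : G, ℓ = fun χ : ↥S => (((χ : G →* ℂˣ) x : ℂˣ) : ℂ)} =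
    {ℓ : ↥S → ℂ | ∃ Y : Matrix (G →* ℂˣ) (G →* ℂˣ) ℂ, Y.PosSemidef ∧
      (∀ χ : G →* ℂˣ, Y χ χ = 1) ∧
      ∀ (χ χ' : G →* ℂˣ) (h : χ⁻¹ * χ' ∈ S), Y χ χ' = ℓ ⟨χ⁻¹ * χ', h⟩} :=
  moment_polytope_unstructured_general G S
end

section
/- Let 𝓛 be a real-linear subspace of the d×d complex Hermitian matrices, and let J be a d×d real orthogonal matrix with J² = I such that J L Jᵀ = conj(L) (entrywise complex conjugation) for every L ∈ 𝓛. Then {L ∈ 𝓛 : L is positive semidefinite} = {L ∈ 𝓛 : Re(L) − J·Im(L) is a real symmetric positive semidefinite matrix}; in particular, for L ∈ 𝓛, L is Hermitian positive semidefinite if and only if the real matrix Re(L) − J·Im(L) is symmetric positive semidefinite. -/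
/-!
Let `P = (1 + J)/2` and `Q = (1 - J)/2` be the spectral projections of the symmetric involution
`J`, and `U = P + i Q`, a unitary. Writing `L = A + i B`, the hypothesis says that `A` commutes
and `B` anticommutes with `J`, and a direct computation gives `U* L U = A - J B`, a real matrix.
Positive semidefiniteness is invariant under unitary congruence, and a real matrix is positive
semidefinite over `ℂ` iff it is so over `ℝ`.
-/

open scoped ComplexOrder Matrix
open Matrix Complex

variable {n : Type*} [Fintype n]

lemma dotProduct_mulVec_map_ofReal (M : Matrix n n ℝ) (x : n → ℝ) :
    star (ofReal ∘ x) ⬝ᵥ (M.map ofReal *ᵥ (ofReal ∘ x)) = ((x ⬝ᵥ (M *ᵥ x) : ℝ) : ℂ) := by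
  simp [dotProduct, mulVec]

lemma posSemidef_map_ofReal_iff {M : Matrix n n ℝ} :
    (M.map ofReal).PosSemidef ↔ M.PosSemidef := by
  constructor
  · intro hM
    refine .of_dotProduct_mulVec_nonneg ?_ fun x => ?_
    · exact (isHermitian_map_iff (fun _ => (conj_ofReal _).symm) ofReal_injective).mp
        hM.isHermitian
    · simpa [dotProduct_mulVec_map_ofReal] using hM.dotProduct_mulVec_nonneg (ofReal ∘ x)
  · intro hM
    obtain ⟨m, v, rfl⟩ := posSemidef_iff_eq_sum_vecMulVec.mp hM
    refine posSemidef_iff_eq_sum_vecMulVec.mpr ⟨m, fun i => ofReal ∘ v i, ?_⟩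
    ext a b
    simp [Matrix.sum_apply, vecMulVec_apply]

omit [Fintype n] in
lemma map_re_map_ofReal (L : Matrix n n ℂ) :
    (L.map re).map ofReal = (1 / 2 : ℂ) • (L + L.map (starRingEnd ℂ)) := by
  ext i j
  simp [Complex.ext_iff]
  ring

omit [Fintype n] in
lemma map_im_map_ofReal (L : Matrix n n ℂ) :
    (L.map im).map ofReal = (I / 2) • (L.map (starRingEnd ℂ) - L) := by
  ext i j
  simp [Complex.ext_iff]
  ring

variable [DecidableEq n]

lemma map_ofReal_mul (A B : Matrix n n ℝ) :
    (A * B).map ofReal = A.map ofReal * B.map ofReal :=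
  map_mul ofRealHom.mapMatrix A B

lemma transpose_eq_self_of_orthogonal_of_involutive {J : Matrix n n ℝ}
    (hJorth : Jᵀ * J = 1) (hJsq : J * J = 1) : Jᵀ = J :=
  calc Jᵀ = Jᵀ * (J * J) := by rw [hJsq, mul_one]
    _ = J := by rw [← mul_assoc, hJorth, one_mul]

lemma map_ofReal_mul_self_of_involutive {J : Matrix n n ℝ} (hJsq : J * J = 1) :
    J.map ofReal * J.map ofReal = 1 := by
  rw [← map_ofReal_mul, hJsq, Matrix.map_one _ ofReal_zero ofReal_one]

/-- `P + i Q` for the spectral projections `P, Q` of an involution `J`: it acts as `1` on the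
`+1`-eigenspace of `J` and as `i` on its `-1`-eigenspace. -/
noncomputable def twistUnitary (J : Matrix n n ℝ) : Matrix n n ℂ :=
  ((1 + I) / 2) • 1 + ((1 - I) / 2) • J.map ofReal

omit [Fintype n] in
lemma star_twistUnitary {J : Matrix n n ℝ} (hJ : Jᵀ = J) :
    star (twistUnitary J) = ((1 - I) / 2) • 1 + ((1 + I) / 2) • J.map ofReal := by
  have hJc : (J.map ofReal)ᴴ = J.map ofReal := by
    ext i j
    simpa using congrArg ofReal (congrFun (congrFun hJ i) j)
  rw [twistUnitary, star_eq_conjTranspose, conjTranspose_add, conjTranspose_smul,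
    conjTranspose_smul, conjTranspose_one, hJc]
  congr 2 <;> simp [Complex.ext_iff]

lemma twistUnitary_mem_unitaryGroup {J : Matrix n n ℝ} (hJ : Jᵀ = J) (hJsq : J * J = 1) :
    twistUnitary J ∈ unitaryGroup n ℂ := by
  rw [mem_unitaryGroup_iff', star_twistUnitary hJ, twistUnitary]
  simp only [add_mul, mul_add, smul_mul_smul, one_mul, mul_one,
    map_ofReal_mul_self_of_involutive hJsq]
  match_scalars
  · linear_combination (-1 / 2 : ℂ) * I_sq
  · linear_combination (1 / 2 : ℂ) * I_sq

lemma star_twistUnitary_mul_mul {J : Matrix n n ℝ} (hJ : Jᵀ = J) (hJsq : J * J = 1)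
    {L : Matrix n n ℂ} (hL : J.map ofReal * L * J.map ofReal = L.map (starRingEnd ℂ)) :
    star (twistUnitary J) * L * twistUnitary J = (L.map re - J * L.map im).map ofReal := by
  have hJL : J.map ofReal * L.map (starRingEnd ℂ) = L * J.map ofReal := by
    rw [← hL, ← mul_assoc, ← mul_assoc, map_ofReal_mul_self_of_involutive hJsq, one_mul]
  rw [star_twistUnitary hJ, twistUnitary, Matrix.map_sub _ ofReal_sub, map_ofReal_mul,
    map_re_map_ofReal, map_im_map_ofReal]
  simp only [add_mul, mul_add, mul_sub, smul_mul_assoc, mul_smul_comm, one_mul, mul_one, hL, hJL]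
  match_scalars
  · linear_combination (-1 / 4 : ℂ) * I_sq
  · linear_combination (1 / 4 : ℂ) * I_sq
  · linear_combination (1 / 4 : ℂ) * I_sq
  · linear_combination (-1 / 4 : ℂ) * I_sq

lemma posSemidef_iff_posSemidef_re_sub_mul_im {J : Matrix n n ℝ} (hJ : Jᵀ = J)
    (hJsq : J * J = 1) {L : Matrix n n ℂ}
    (hL : J.map ofReal * L * J.map ofReal = L.map (starRingEnd ℂ)) :
    L.PosSemidef ↔ (L.map re - J * L.map im).PosSemidef := by
  have hU : IsUnit (twistUnitary J) :=
    Unitary.isUnit_coe (U := ⟨_, twistUnitary_mem_unitaryGroup hJ hJsq⟩)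
  rw [← posSemidef_map_ofReal_iff, ← star_twistUnitary_mul_mul hJ hJsq hL,
    hU.posSemidef_star_left_conjugate_iff]

theorem hermitian_psd_iff_real_psd_general
    {d : ℕ}
    (𝓛 : Submodule ℝ (Matrix (Fin d) (Fin d) ℂ))
    (J : Matrix (Fin d) (Fin d) ℝ)
    (hJorth : Jᵀ * J = 1)
    (hJsq : J * J = 1)
    (hconj : ∀ L ∈ 𝓛,
      (J.map (Complex.ofReal)) * L * (J.map (Complex.ofReal))ᵀ =
        L.map (starRingEnd ℂ)) :
    ({L : Matrix (Fin d) (Fin d) ℂ | L ∈ 𝓛 ∧ L.PosSemidef} =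
      {L : Matrix (Fin d) (Fin d) ℂ | L ∈ 𝓛 ∧
        (L.map Complex.re - J * L.map Complex.im).PosSemidef}) ∧
    ∀ L ∈ 𝓛, (L.PosSemidef ↔ (L.map Complex.re - J * L.map Complex.im).PosSemidef) := by
  have hJ := transpose_eq_self_of_orthogonal_of_involutive hJorth hJsq
  have key : ∀ L ∈ 𝓛, (L.PosSemidef ↔ (L.map re - J * L.map im).PosSemidef) := fun L hL =>
    posSemidef_iff_posSemidef_re_sub_mul_im hJ hJsq <| by
      simpa [← transpose_map, hJ] using hconj L hL
  exact ⟨Set.ext fun L => and_congr_right (key L), key⟩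

/-- **Complex Hermitian LMIs as real symmetric LMIs of the same size.** Let `𝓛` be a
real-linear subspace of `d × d` complex Hermitian matrices and `J` a real orthogonal
matrix with `J² = I` such that congruence by `J` acts as entrywise complex conjugation
on `𝓛`. Then an element `L ∈ 𝓛` is (Hermitian) positive semidefinite iff the real
matrix `Re(L) − J·Im(L)` is (symmetric) positive semidefinite. -/
theorem hermitian_psd_iff_real_psd
    {d : ℕ}
    (𝓛 : Submodule ℝ (Matrix (Fin d) (Fin d) ℂ))
    (hherm : ∀ L ∈ 𝓛, L.IsHermitian)
    (J : Matrix (Fin d) (Fin d) ℝ)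
    (hJorth : Jᵀ * J = 1)
    (hJsq : J * J = 1)
    (hconj : ∀ L ∈ 𝓛,
      (J.map (Complex.ofReal)) * L * (J.map (Complex.ofReal))ᵀ =
        L.map (starRingEnd ℂ)) :
    ({L : Matrix (Fin d) (Fin d) ℂ | L ∈ 𝓛 ∧ L.PosSemidef} =
      {L : Matrix (Fin d) (Fin d) ℂ | L ∈ 𝓛 ∧
        (L.map Complex.re - J * L.map Complex.im).PosSemidef}) ∧
    ∀ L ∈ 𝓛, (L.PosSemidef ↔ (L.map Complex.re - J * L.map Complex.im).PosSemidef) :=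
  hermitian_psd_iff_real_psd_general 𝓛 J hJorth hJsq hconj
end

section
/- Let n ≥ 1. The half-cube graph is the simple graph with vertex set 2^{[n]} (all subsets of [n] = {1,…,n}) in which distinct S, T' are adjacent iff |S Δ T'| = 2, where Δ denotes symmetric difference. Let T = {S ⊆ [n] : |S| ∈ {0,2,4,…,⌈n/2⌉}} if ⌈n/2⌉ is even, and T = {S ⊆ [n] : |S| ∈ {1,3,5,…,⌈n/2⌉}} if ⌈n/2⌉ is odd. Then the half-cube graph admits a chordal cover Γ (a chordal graph on the same vertex set whose edge set contains that of the half-cube graph) such that for every maximal clique C of Γ there exists S₀ ⊆ [n] with S₀ Δ C := {S₀ Δ S : S ∈ C} ⊆ T. -/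
open scoped Classical symmDiff

/-- A simple graph is chordal if every cycle of length at least 4 has a chord. -/
def IsChordal {V : Type*} (Γ : SimpleGraph V) : Prop :=
  ∀ ⦃u : V⦄ (c : Γ.Walk u u), c.IsCycle → 4 ≤ c.length →
    ∃ v w, v ∈ c.support ∧ w ∈ c.support ∧ Γ.Adj v w ∧ s(v, w) ∉ c.edges

/-!
Order the subsets by decreasing size and, within one size, colexicographically. The cover `Γ`
joins two sets of equal size, and a set to a colex-larger set two elements larger. The later
neighbours of every vertex form a clique, so this order is a perfect elimination ordering and `Γ`
is chordal. Two sets at half-cube distance two have equal size or are nested, hence colex-ordered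
by inclusion, so `Γ` covers the half-cube.

A clique of `Γ` meets at most two sizes `k` and `k + 2`. With `m = ⌈n/2⌉`, translating by `∅`, by
a singleton, or by their complements moves it into `T`, unless `n = 2m` and `k = m - 1`. In that
case the colex condition on the edges between the two levels forces either every `(m+1)`-set of
the clique to contain the largest element `⊤`, or no `(m-1)`-set to contain it; translate by `{⊤}`
or by its complement, respectively.
-/

open Finset Finset.Colex SimpleGraph

lemma SimpleGraph.Walk.IsCycle.snd_penultimate_notMem_edges {V : Type*} {G : SimpleGraph V}
    {v : V} {c : G.Walk v v} (hc : c.IsCycle) (hlen : 4 ≤ c.length) :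
    s(c.snd, c.penultimate) ∉ c.edges := by
  intro hmem
  have hvx : v ≠ c.snd := (c.adj_snd hc.not_nil).ne
  have hyv : c.penultimate ≠ v := (c.adj_penultimate hc.not_nil).ne
  rw [← congrArg Walk.edges (c.cons_tail_eq hc.not_nil), Walk.edges_cons, List.mem_cons] at hmem
  rcases hmem with hfirst | htail
  · rw [Sym2.eq_iff] at hfirst
    rcases hfirst with ⟨h, -⟩ | ⟨-, h⟩
    exacts [hvx h.symm, hyv h]
  -- the tail is a path starting at `c.snd`, so its only edge at `c.snd` is its first one
  have h := hc.isPath_tail.eq_snd_of_mem_edges htail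
  rw [Walk.snd, Walk.getVert_tail, Walk.penultimate] at h
  have := hc.getVert_injOn (by simp; omega) (by simp; omega) h
  omega

theorem isChordal_of_perfectElimination {V α : Type*} [LinearOrder α] {G : SimpleGraph V}
    (κ : V → α) (hκ : Function.Injective κ) (h : ∀ v, G.IsClique {u | G.Adj v u ∧ κ v < κ u}) :
    IsChordal G := by
  intro u c hc hlen
  obtain ⟨v, hv, hmin⟩ := c.support.toFinset.exists_min_image κ ⟨u, by simp⟩
  rw [List.mem_toFinset] at hv
  set c' := c.rotate v hv
  have hc' : c'.IsCycle := hc.rotate hv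
  have hsupp {w : V} (hw : w ∈ c'.support) : w ∈ c.support :=
    (c.mem_support_rotate_iff v hv).mp hw
  have hlater {w : V} (hvw : G.Adj v w) (hw : w ∈ c'.support) : G.Adj v w ∧ κ v < κ w :=
    ⟨hvw, (hmin w (List.mem_toFinset.mpr (hsupp hw))).lt_of_ne (hκ.ne hvw.ne)⟩
  have hx := hlater (c'.adj_snd hc'.not_nil) (c'.getVert_mem_support 1)
  have hy := hlater (c'.adj_penultimate hc'.not_nil).symm (c'.getVert_mem_support _)
  refine ⟨c'.snd, c'.penultimate, hsupp (c'.getVert_mem_support 1),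
    hsupp (c'.getVert_mem_support _), h v hx hy hc'.snd_ne_penultimate, fun hmem => ?_⟩
  exact hc'.snd_penultimate_notMem_edges (by simpa [c'] using hlen)
    ((c.rotate_edges v hv).mem_iff.mpr hmem)

section Cover

def halfcube (α : Type*) [DecidableEq α] : SimpleGraph (Finset α) :=
  fromRel fun s t => #(s ∆ t) = 2

def halfcubeCover (α : Type*) [LinearOrder α] : SimpleGraph (Finset α) :=
  fromRel fun s t => #s = #t ∨ (#s + 2 = #t ∧ toColex s < toColex t)

def eliminationKey {α : Type*} [LinearOrder α] (s : Finset α) : Lex (ℕᵒᵈ × Colex (Finset α)) :=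
  toLex (OrderDual.toDual #s, toColex s)

variable {α : Type*} [LinearOrder α] {s t u v w : Finset α}

lemma halfcubeCover_adj : (halfcubeCover α).Adj s t ↔ s ≠ t ∧
    (#s = #t ∨ (#s + 2 = #t ∧ toColex s < toColex t) ∨ (#t + 2 = #s ∧ toColex t < toColex s)) := by
  simp only [halfcubeCover, fromRel_adj, eq_comm (a := #t)]
  tauto

lemma eliminationKey_injective : Function.Injective (eliminationKey (α := α)) := fun _ _ h =>
  toColex.injective (congrArg (fun k => (ofLex k).2) h)

lemma halfcubeCover_adj_of_eliminationKey_lt (h : (halfcubeCover α).Adj v u)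
    (hlt : eliminationKey v < eliminationKey u) :
    (#u = #v ∧ toColex v < toColex u) ∨ (#u + 2 = #v ∧ toColex u < toColex v) := by
  rw [eliminationKey, eliminationKey, Prod.Lex.toLex_lt_toLex, OrderDual.toDual_lt_toDual] at hlt
  obtain ⟨-, hcard | ⟨hcard, -⟩ | hdown⟩ := halfcubeCover_adj.mp h
  · rcases hlt with hlt | ⟨-, hlt⟩
    exacts [absurd hcard hlt.ne', .inl ⟨hcard.symm, hlt⟩]
  · rcases hlt with hlt | ⟨hcard', -⟩
    exacts [absurd hlt (by omega), absurd (OrderDual.toDual_inj.mp hcard') (by omega)]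
  · exact .inr hdown

lemma halfcubeCover_isClique_later (v : Finset α) :
    (halfcubeCover α).IsClique
      {u | (halfcubeCover α).Adj v u ∧ eliminationKey v < eliminationKey u} := by
  rintro u ⟨hu, hvu⟩ w ⟨hw, hvw⟩ huw
  rw [halfcubeCover_adj]
  rcases halfcubeCover_adj_of_eliminationKey_lt hu hvu with ⟨hu, hu'⟩ | ⟨hu, hu'⟩ <;>
    rcases halfcubeCover_adj_of_eliminationKey_lt hw hvw with ⟨hw, hw'⟩ | ⟨hw, hw'⟩
  · exact ⟨huw, .inl (by omega)⟩
  · exact ⟨huw, .inr (.inr ⟨by omega, hw'.trans hu'⟩)⟩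
  · exact ⟨huw, .inr (.inl ⟨by omega, hu'.trans hw'⟩)⟩
  · exact ⟨huw, .inl (by omega)⟩

theorem isChordal_halfcubeCover : IsChordal (halfcubeCover α) :=
  isChordal_of_perfectElimination eliminationKey eliminationKey_injective
    halfcubeCover_isClique_later

lemma halfcube_le_halfcubeCover : halfcube α ≤ halfcubeCover α := by
  intro s t hst
  obtain ⟨hne, hcard⟩ := fromRel_adj _ s t |>.mp hst
  have h2 : #(s \ t) + #(t \ s) = 2 := by
    rw [← card_union_of_disjoint disjoint_sdiff_sdiff, ← sup_eq_union, ← symmDiff_def]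
    rwa [symmDiff_comm t s, or_self] at hcard
  have hs := card_sdiff_add_card_inter s t
  have ht := card_sdiff_add_card_inter t s
  rw [inter_comm] at ht
  rw [halfcubeCover_adj]
  refine ⟨hne, ?_⟩
  by_cases hst : s ⊆ t
  · rw [sdiff_eq_empty_iff_subset.mpr hst, card_empty] at hs h2
    exact .inr (.inl ⟨by omega, toColex_lt_toColex_of_ssubset (hst.ssubset_of_ne hne)⟩)
  by_cases hts : t ⊆ s
  · rw [sdiff_eq_empty_iff_subset.mpr hts, card_empty] at ht h2
    exact .inr (.inr ⟨by omega, toColex_lt_toColex_of_ssubset (hts.ssubset_of_ne hne.symm)⟩)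
  rw [← sdiff_nonempty, ← card_pos] at hst hts
  exact .inl (by omega)

lemma top_mem_of_halfcubeCover_adj [OrderTop α] (h : (halfcubeCover α).Adj s t) (hst : #s < #t)
    (hs : ⊤ ∈ s) : ⊤ ∈ t := by
  obtain ⟨-, hcard | ⟨-, hlt⟩ | ⟨hcard, -⟩⟩ := halfcubeCover_adj.mp h
  · omega
  · by_contra ht
    obtain ⟨a, -, -, ha⟩ := toColex_lt_toColex_iff_exists_forall_lt.mp hlt
    exact (ha ⊤ hs ht).not_ge le_top
  · omega

lemma card_eq_or_eq_add_two_of_isClique {C : Set (Finset α)} (hC : (halfcubeCover α).IsClique C)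
    {a : Finset α} (ha : a ∈ C) (hmin : ∀ s ∈ C, #a ≤ #s) :
    ∀ s ∈ C, #s = #a ∨ #s = #a + 2 := by
  intro s hs
  obtain rfl | hne := eq_or_ne s a
  · exact .inl rfl
  have := hmin s hs
  obtain ⟨-, h | ⟨h, -⟩ | ⟨h, -⟩⟩ := halfcubeCover_adj.mp (hC hs ha hne) <;> omega

end Cover

section Translate

variable {α : Type*} [DecidableEq α]

def parityBall (m : ℕ) : Set (Finset α) := {s | #s % 2 = m % 2 ∧ #s ≤ m}

lemma card_singleton_symmDiff (i : α) (s : Finset α) :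
    #({i} ∆ s) = if i ∈ s then #s - 1 else #s + 1 := by
  split_ifs with h
  · rw [symmDiff_of_le (singleton_subset_iff.mpr h),
      card_sdiff_of_subset (singleton_subset_iff.mpr h), card_singleton]
  · rw [(disjoint_singleton_left.mpr h).symmDiff_eq_sup, sup_eq_union,
      card_union_of_disjoint (disjoint_singleton_left.mpr h), card_singleton, add_comm]

lemma card_compl_symmDiff [Fintype α] (b s : Finset α) :
    #(bᶜ ∆ s) = Fintype.card α - #(b ∆ s) := by
  rw [← card_compl]
  congr 1
  ext
  simp only [mem_symmDiff, mem_compl]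
  tauto

lemma exists_symmDiff_mem_parityBall (b : Finset α) (i : α) {C : Set (Finset α)} {j m : ℕ}
    (hC : ∀ s ∈ C, #(b ∆ s) % 2 = j % 2 ∧ #(b ∆ s) ≤ m) :
    ∃ s₀ : Finset α, ∀ s ∈ C, s₀ ∆ s ∈ parityBall m := by
  by_cases hj : j % 2 = m % 2
  · exact ⟨b, fun s hs => ⟨(hC s hs).1.trans hj, (hC s hs).2⟩⟩
  refine ⟨{i} ∆ b, fun s hs => ?_⟩
  have := hC s hs
  rw [parityBall, Set.mem_ofPred_eq, symmDiff_assoc, card_singleton_symmDiff]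
  split_ifs with h
  · have := card_pos.mpr ⟨i, h⟩
    omega
  · omega

lemma exists_symmDiff_mem_parityBall_of_isClique [LinearOrder α] [Fintype α] [OrderTop α]
    {C : Set (Finset α)} (hC : (halfcubeCover α).IsClique C) :
    ∃ s₀ : Finset α, ∀ s ∈ C, s₀ ∆ s ∈ parityBall ((Fintype.card α + 1) / 2) := by
  obtain rfl | hne := C.eq_empty_or_nonempty
  · exact ⟨∅, by simp⟩
  obtain ⟨a, ha, hmin⟩ := C.exists_min_image card C.toFinite hne
  have hlayer := card_eq_or_eq_add_two_of_isClique hC ha hmin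
  set n := Fintype.card α
  have hcard (s : Finset α) : #s ≤ n := card_le_univ s
  set m := (n + 1) / 2 with hm
  by_cases hlow : #a + 2 ≤ m
  · refine exists_symmDiff_mem_parityBall ⊥ ⊤ (j := #a) fun s hs => ?_
    rw [bot_symmDiff]
    have := hlayer s hs
    omega
  by_cases hhigh : n ≤ m + #a
  · refine exists_symmDiff_mem_parityBall ⊥ᶜ ⊤ (j := n - #a) fun s hs => ?_
    rw [card_compl_symmDiff, bot_symmDiff]
    have := hlayer s hs
    have := hcard s
    omega
  have hsingle (s : Finset α) := card_singleton_symmDiff ⊤ s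
  by_cases htop : ∀ s ∈ C, #s = #a + 2 → ⊤ ∈ s
  · refine exists_symmDiff_mem_parityBall {⊤} ⊤ (j := m) fun s hs => ?_
    have hs' := hsingle s
    rcases hlayer s hs with h | h
    · split_ifs at hs' with hstop
      · have := card_pos.mpr ⟨_, hstop⟩
        omega
      · omega
    · rw [if_pos (htop s hs h)] at hs'
      omega
  push Not at htop
  obtain ⟨t, ht, htcard, httop⟩ := htop
  have hbelow : ∀ s ∈ C, #s = #a → ⊤ ∉ s := fun s hs hsa hstop =>
    httop <| top_mem_of_halfcubeCover_adj (hC hs ht (by rintro rfl; omega)) (by omega) hstop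
  refine exists_symmDiff_mem_parityBall {⊤}ᶜ ⊤ (j := m) fun s hs => ?_
  rw [card_compl_symmDiff]
  have hs' := hsingle s
  have := hcard ({⊤} ∆ s)
  rcases hlayer s hs with h | h
  · rw [if_neg (hbelow s hs h)] at hs'
    omega
  · split_ifs at hs' <;> omega

end Translate

/-- **Chordal cover of the half-cube graph (Proposition 6).** The half-cube graph (the
graph on all subsets of `[n]` in which two subsets are adjacent iff their symmetric
difference has two elements) admits a chordal cover `Γ` such that every maximal clique
`C` of `Γ` has a translate `S₀ Δ C` contained in the family `T` of subsets `S ⊆ [n]`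
with `|S| ≤ ⌈n/2⌉` and `|S| ≡ ⌈n/2⌉ (mod 2)`. -/
theorem halfcube_chordal_cover (n : ℕ) (hn : 1 ≤ n) :
    ∃ Γ : SimpleGraph (Finset (Fin n)),
      IsChordal Γ ∧
      (SimpleGraph.fromRel fun s t : Finset (Fin n) => (s ∆ t).card = 2) ≤ Γ ∧
      ∀ C : Set (Finset (Fin n)), Γ.IsClique C →
        (∀ C', Γ.IsClique C' → C ⊆ C' → C' = C) →
        ∃ s₀ : Finset (Fin n), (fun s => s₀ ∆ s) '' C ⊆
          {s : Finset (Fin n) | s.card % 2 = ((n + 1) / 2) % 2 ∧ s.card ≤ (n + 1) / 2} := by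
  have : NeZero n := ⟨by omega⟩
  refine ⟨halfcubeCover (Fin n), isChordal_halfcubeCover, halfcube_le_halfcubeCover,
    fun C hC _ => ?_⟩
  obtain ⟨s₀, hs₀⟩ := exists_symmDiff_mem_parityBall_of_isClique hC
  rw [Fintype.card_fin] at hs₀
  exact ⟨s₀, Set.image_subset_iff.mpr hs₀⟩
end

section
/- Let N > 2 be an integer. Write N = Σ_{j=1}^l 2^{k_j} where k_1 < k_2 < … < k_l are the positions of the nonzero digits in the binary expansion of N, and let k be the largest integer with 2^k < N (so k = k_1 − 1 if N is a power of two, and k = k_l otherwise). Let T ⊆ ℤ_N be the image modulo N of the set of integers {0} ∪ {−2^i, 2^i : i = 0, …, k−1} ∪ { Σ_{j=1}^i 2^{k_j} : i = 1, …, l−2 }. Then |T| ≤ 3·log₂(N), and the cycle graph C_N admits a chordal cover Γ such that for every maximal clique C of Γ there exists t ∈ ℤ_N with t + C := {t + c : c ∈ C} ⊆ T. -/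
open scoped Classical

/-!
The cover joins every vertex `0 < n < N` of `ℤ_N`, written `n = 2^s (2r + 1)`, to its two dyadic
parents `n - 2^s` and `min (n + 2^s) N`, where `N` is the vertex `0`. Parents have larger 2-adic
valuation than their child (with `0` above everything), and the two parents of a vertex are again
parent and child, so ordering by valuation is a perfect elimination ordering and the graph is
chordal. Of `n` and `n + 1` one is odd, hence a child of the other, so the cover contains `C_N`.

A clique lies in `{n, n - 2^s, min (n + 2^s) N}` for its vertex `n` of least valuation. For
`s < k` its translate by `-n` is `{0, -2^s, 2^s}`, or `{0, -2^s, N - n}` when `n + 2^s > N`; then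
`N - n = N mod 2^s` is a partial sum of the binary expansion of `N`. For `s = k` we have `n = 2^k`
and the clique lies in `{2^k, 0}`, a translate of `{2^(k-1), -2^(k-1)}`.
-/

namespace SimpleGraph

variable {V α : Type*} [LinearOrder α] {G : SimpleGraph V} {P : V → V → Prop}

theorem Walk.IsCycle.mk_snd_penultimate_notMem_edges {u : V} {c : G.Walk u u} (hc : c.IsCycle)
    (hlen : 4 ≤ c.length) : s(c.snd, c.penultimate) ∉ c.edges := by
  have hedges : c.edges = s(u, c.snd) :: c.tail.edges := by
    conv_lhs => rw [← c.cons_tail_eq hc.not_nil]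
    rfl
  rw [hedges, List.mem_cons, Sym2.eq_iff]
  rintro ((⟨h, -⟩ | ⟨-, h⟩) | h)
  · exact (c.adj_snd hc.not_nil).ne h.symm
  · exact (c.adj_penultimate hc.not_nil).ne h
  · have h2 := hc.isPath_tail.eq_snd_of_mem_edges h
    rw [penultimate, snd, getVert_tail] at h2
    have := hc.getVert_injOn (by simp only [Set.mem_ofPred_eq]; omega)
      (by simp only [Set.mem_ofPred_eq]; omega) h2
    omega

theorem isChordal_of_perfectEliminationRank (f : V → α)
    (hne : ∀ ⦃x y⦄, G.Adj x y → f x ≠ f y)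
    (hup : ∀ ⦃v w₁ w₂⦄, G.Adj v w₁ → G.Adj v w₂ → f v < f w₁ → f v < f w₂ →
      w₁ ≠ w₂ → G.Adj w₁ w₂) :
    IsChordal G := by
  intro u c hc hlen
  obtain ⟨v, hv, hmin⟩ := c.support.toFinset.exists_min_image f ⟨u, by simp⟩
  rw [List.mem_toFinset] at hv
  set c' := c.rotate v hv
  have hc' : c'.IsCycle := hc.rotate hv
  have hsupp {w} (hw : w ∈ c'.support) : w ∈ c.support := (c.mem_support_rotate_iff v hv).mp hw
  have hlow {w} (hvw : G.Adj v w) (hw : w ∈ c'.support) : f v < f w :=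
    (hmin w (List.mem_toFinset.mpr (hsupp hw))).lt_of_ne (hne hvw)
  have hx := c'.adj_snd hc'.not_nil
  have hy := (c'.adj_penultimate hc'.not_nil).symm
  refine ⟨c'.snd, c'.penultimate, hsupp (c'.getVert_mem_support 1),
    hsupp (c'.getVert_mem_support _), hup hx hy (hlow hx (c'.getVert_mem_support 1))
    (hlow hy (c'.getVert_mem_support _)) hc'.snd_ne_penultimate, ?_⟩
  rw [← (c.rotate_edges v hv).mem_iff]
  exact hc'.mk_snd_penultimate_notMem_edges (by simpa [c'] using hlen)

theorem fromRel_adj_of_lt {f : V → α} (hP : ∀ ⦃x y⦄, P x y → f x < f y) {x y : V}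
    (hxy : (fromRel P).Adj x y) (hlt : f x < f y) : P x y :=
  hxy.2.resolve_right fun h => (hP h).not_gt hlt

theorem ne_of_fromRel_adj {f : V → α} (hP : ∀ ⦃x y⦄, P x y → f x < f y) {x y : V}
    (hxy : (fromRel P).Adj x y) : f x ≠ f y :=
  hxy.2.elim (fun h => (hP h).ne) fun h => (hP h).ne'

theorem isChordal_fromRel (f : V → α) (hP : ∀ ⦃x y⦄, P x y → f x < f y)
    (hpar : ∀ ⦃x y z⦄, P x y → P x z → y ≠ z → P y z ∨ P z y) :
    IsChordal (fromRel P) :=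
  isChordal_of_perfectEliminationRank f (fun _ _ => ne_of_fromRel_adj hP)
    fun _ _ _ h₁ h₂ hf₁ hf₂ hne =>
      ⟨hne, hpar (fromRel_adj_of_lt hP h₁ hf₁) (fromRel_adj_of_lt hP h₂ hf₂) hne⟩

theorem exists_mem_subset_insert_of_isClique_fromRel {f : V → α}
    (hP : ∀ ⦃x y⦄, P x y → f x < f y) {C : Set V} (hC : (fromRel P).IsClique C)
    (hfin : C.Finite) (hne : C.Nonempty) :
    ∃ v ∈ C, C ⊆ insert v {y | P v y} := by
  obtain ⟨v, hv, hmin⟩ := Set.exists_min_image C f hfin hne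
  refine ⟨v, hv, fun w hw => or_iff_not_imp_left.mpr fun hwv => ?_⟩
  have hvw := hC hv hw (Ne.symm hwv)
  exact fromRel_adj_of_lt hP hvw ((hmin w hw).lt_of_ne (ne_of_fromRel_adj hP hvw))

end SimpleGraph

namespace CycleTriangulation

open Finset

def lowerParent (n : ℕ) : ℕ := n - 2 ^ padicValNat 2 n

/-- Capped at `N`, which stands for the vertex `0` of `ZMod N`. -/
def upperParent (N n : ℕ) : ℕ := min (n + 2 ^ padicValNat 2 n) N

theorem padicValNat_two_pow_mul_odd (v r : ℕ) : padicValNat 2 (2 ^ v * (2 * r + 1)) = v := by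
  rw [padicValNat.mul (by positivity) (by omega), padicValNat.prime_pow,
    padicValNat.eq_zero_of_not_dvd (by omega), add_zero]

theorem lt_padicValNat_two_pow_succ_mul {v m : ℕ} (hm : m ≠ 0) :
    v < padicValNat 2 (2 ^ (v + 1) * m) :=
  (padicValNat_dvd_iff_le (by positivity)).mp (dvd_mul_right _ _)

theorem lowerParent_two_pow_mul_odd (v r : ℕ) :
    lowerParent (2 ^ v * (2 * r + 1)) = 2 ^ (v + 1) * r := by
  rw [lowerParent, padicValNat_two_pow_mul_odd]
  exact Nat.sub_eq_of_eq_add (by ring)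

theorem upperParent_two_pow_mul_odd (N v r : ℕ) :
    upperParent N (2 ^ v * (2 * r + 1)) = min (2 ^ (v + 1) * (r + 1)) N := by
  rw [upperParent, padicValNat_two_pow_mul_odd]
  ring_nf

theorem padicValNat_lt_padicValNat_lowerParent {n : ℕ} (h : lowerParent n ≠ 0) :
    padicValNat 2 n < padicValNat 2 (lowerParent n) := by
  have hn : n ≠ 0 := by rintro rfl; exact h rfl
  obtain ⟨v, _, ⟨r, rfl⟩, rfl⟩ := Nat.exists_eq_two_pow_mul_odd hn
  rw [lowerParent_two_pow_mul_odd] at h ⊢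
  rw [padicValNat_two_pow_mul_odd]
  exact lt_padicValNat_two_pow_succ_mul (right_ne_zero_of_mul h)

theorem padicValNat_lt_padicValNat_add {n : ℕ} (hn : n ≠ 0) :
    padicValNat 2 n < padicValNat 2 (n + 2 ^ padicValNat 2 n) := by
  obtain ⟨v, _, ⟨r, rfl⟩, rfl⟩ := Nat.exists_eq_two_pow_mul_odd hn
  rw [padicValNat_two_pow_mul_odd,
    show 2 ^ v * (2 * r + 1) + 2 ^ v = 2 ^ (v + 1) * (r + 1) by ring]
  exact lt_padicValNat_two_pow_succ_mul (by omega)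

/-- The two parents of `n` are parent and child, unless they are `0` and `N`, the same vertex of
`ZMod N`. -/
theorem lowerParent_upperParent_trichotomy (N : ℕ) {n : ℕ} (hn : n ≠ 0) :
    (lowerParent n ≠ 0 ∧ upperParent N (lowerParent n) = upperParent N n) ∨
      (upperParent N n < N ∧ lowerParent (upperParent N n) = lowerParent n) ∨
      (lowerParent n = 0 ∧ upperParent N n = N) := by
  obtain ⟨v, _, ⟨r, rfl⟩, rfl⟩ := Nat.exists_eq_two_pow_mul_odd hn
  rw [lowerParent_two_pow_mul_odd, upperParent_two_pow_mul_odd]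
  rcases Nat.even_or_odd' r with ⟨q, rfl | rfl⟩
  · by_cases hN : 2 ^ (v + 1) * (2 * q + 1) < N
    · refine .inr (.inl ?_)
      rw [min_eq_left hN.le, lowerParent_two_pow_mul_odd]
      exact ⟨hN, by ring⟩
    · rw [min_eq_right (by omega)]
      by_cases hq : q = 0
      · subst hq; simp
      · left
        refine ⟨by positivity, min_eq_right ?_⟩
        have hv := lt_padicValNat_two_pow_succ_mul (v := v) (m := 2 * q) (by omega)
        have := Nat.pow_le_pow_right (n := 2) (by norm_num) hv
        have : 2 ^ (v + 1) * (2 * q + 1) = 2 ^ (v + 1) * (2 * q) + 2 ^ (v + 1) := by ring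
        omega
  · left
    refine ⟨by positivity, ?_⟩
    rw [upperParent_two_pow_mul_odd]
    ring_nf

theorem upperParent_pos {N : ℕ} (hN : 0 < N) (n : ℕ) : 0 < upperParent N n :=
  lt_min (by positivity) hN

theorem upperParent_eq_succ {N n : ℕ} (hn : n < N) (h : Odd n ∨ n + 1 = N) :
    upperParent N n = n + 1 := by
  rcases h with ⟨q, rfl⟩ | h
  · have h := upperParent_two_pow_mul_odd N 0 q
    rw [pow_zero, one_mul, zero_add, pow_one] at h
    rw [h]
    omega
  · have := Nat.one_le_two_pow (n := padicValNat 2 n)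
    exact (min_eq_right (by omega)).trans h.symm

theorem lowerParent_succ_of_even {n : ℕ} (h : Even n) : lowerParent (n + 1) = n := by
  obtain ⟨q, rfl⟩ := h
  simpa [two_mul] using lowerParent_two_pow_mul_odd 0 q

theorem padicValNat_two_lt {m : ℕ} (h : m ≠ 0) : padicValNat 2 m < m :=
  Nat.lt_two_pow_self.trans_le (Nat.le_of_dvd (Nat.pos_of_ne_zero h) pow_padicValNat_dvd)

def IsDyadicParent (N : ℕ) (x y : ZMod N) : Prop :=
  x ≠ 0 ∧ (y = (lowerParent x.val : ZMod N) ∨ y = (upperParent N x.val : ZMod N))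

def dyadicRank (N : ℕ) (x : ZMod N) : ℕ := if x = 0 then N else padicValNat 2 x.val

def dyadicStar (N n : ℕ) : Set (ZMod N) :=
  {(n : ZMod N), (lowerParent n : ZMod N), (upperParent N n : ZMod N)}

section ZMod

variable {N : ℕ}

theorem natCast_ne_zero_of_lt {m : ℕ} (h0 : m ≠ 0) (h : m < N) : (m : ZMod N) ≠ 0 :=
  fun h' => h0 (Nat.eq_zero_of_dvd_of_lt ((ZMod.natCast_eq_zero_iff m N).mp h') h)

theorem isDyadicParent_natCast_iff {m : ℕ} (h0 : m ≠ 0) (h : m < N) {y : ZMod N} :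
    IsDyadicParent N m y ↔ y = (lowerParent m : ZMod N) ∨ y = (upperParent N m : ZMod N) := by
  simp [IsDyadicParent, natCast_ne_zero_of_lt h0 h, ZMod.val_cast_of_lt h]

variable [NeZero N]

theorem dyadicRank_lt_dyadicRank_natCast {x : ZMod N} (hx : x ≠ 0) {m : ℕ} (hm : m ≤ N)
    (h : m ≠ 0 → m < N → padicValNat 2 x.val < padicValNat 2 m) :
    dyadicRank N x < dyadicRank N m := by
  have hx' : padicValNat 2 x.val < N :=
    (padicValNat_two_lt ((ZMod.val_ne_zero x).mpr hx)).trans (ZMod.val_lt x)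
  rw [dyadicRank, if_neg hx]
  rcases (show m = 0 ∨ m = N ∨ (m ≠ 0 ∧ m < N) by omega) with rfl | rfl | ⟨h0, hmN⟩
  · simpa [dyadicRank] using hx'
  · simpa [dyadicRank] using hx'
  · rw [dyadicRank, if_neg (natCast_ne_zero_of_lt h0 hmN), ZMod.val_cast_of_lt hmN]
    exact h h0 hmN

theorem dyadicRank_lt ⦃x y : ZMod N⦄ (h : IsDyadicParent N x y) :
    dyadicRank N x < dyadicRank N y := by
  obtain ⟨hx, rfl | rfl⟩ := h
  · exact dyadicRank_lt_dyadicRank_natCast hx ((Nat.sub_le _ _).trans (ZMod.val_lt x).le)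
      fun h0 _ => padicValNat_lt_padicValNat_lowerParent h0
  · refine dyadicRank_lt_dyadicRank_natCast hx (min_le_right _ _) fun _ hlt => ?_
    rw [upperParent, min_eq_left ((min_lt_iff.mp hlt).resolve_right (lt_irrefl N)).le]
    exact padicValNat_lt_padicValNat_add ((ZMod.val_ne_zero x).mpr hx)

theorem isDyadicParent_lowerParent_upperParent_or {x : ZMod N} (hx : x ≠ 0) :
    IsDyadicParent N (lowerParent x.val) (upperParent N x.val) ∨
      IsDyadicParent N (upperParent N x.val) (lowerParent x.val) ∨
      (lowerParent x.val : ZMod N) = upperParent N x.val := by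
  have hn := (ZMod.val_ne_zero x).mpr hx
  have hlt := ZMod.val_lt x
  rcases lowerParent_upperParent_trichotomy N hn with ⟨ha, hab⟩ | ⟨hb, hba⟩ | ⟨ha, hb⟩
  · refine .inl ((isDyadicParent_natCast_iff ha ?_).mpr (.inr (by rw [hab])))
    exact (Nat.sub_le _ _).trans_lt hlt
  · refine .inr (.inl ((isDyadicParent_natCast_iff ?_ hb).mpr (.inl (by rw [hba]))))
    exact (upperParent_pos (NeZero.pos N) _).ne'
  · exact .inr (.inr (by rw [ha, hb, Nat.cast_zero, ZMod.natCast_self]))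

theorem isDyadicParent_or_of_ne {x y z : ZMod N} (hy : IsDyadicParent N x y)
    (hz : IsDyadicParent N x z) (hyz : y ≠ z) :
    IsDyadicParent N y z ∨ IsDyadicParent N z y := by
  obtain ⟨hx, hy⟩ := hy
  rcases hy with rfl | rfl <;> rcases hz.2 with rfl | rfl <;>
    rcases isDyadicParent_lowerParent_upperParent_or hx with h | h | h <;> tauto

theorem isDyadicParent_add_one (hN : 1 < N) (x : ZMod N) :
    IsDyadicParent N x (x + 1) ∨ IsDyadicParent N (x + 1) x := by
  obtain ⟨n, hn, rfl⟩ : ∃ n < N, (n : ZMod N) = x :=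
    ⟨x.val, ZMod.val_lt x, ZMod.natCast_zmod_val x⟩
  rw [← Nat.cast_succ]
  by_cases h : Odd n ∨ n + 1 = N
  · have hn0 : n ≠ 0 := h.elim (fun h => h.pos.ne') (by omega)
    left
    rw [isDyadicParent_natCast_iff hn0 hn, upperParent_eq_succ hn h]
    exact .inr rfl
  · rw [not_or, Nat.not_odd_iff_even] at h
    right
    rw [isDyadicParent_natCast_iff n.succ_ne_zero (by omega), lowerParent_succ_of_even h.1]
    exact .inl rfl

theorem fromRel_sub_eq_one_le (hN : 1 < N) :
    (SimpleGraph.fromRel fun i j : ZMod N => i - j = 1) ≤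
      SimpleGraph.fromRel (IsDyadicParent N) := by
  rintro x y ⟨hne, h | h⟩ <;> refine ⟨hne, ?_⟩ <;> rw [sub_eq_iff_eq_add'] at h <;> subst h
  · exact (isDyadicParent_add_one hN y).symm
  · exact isDyadicParent_add_one hN x

theorem insert_setOf_isDyadicParent_subset_dyadicStar (x : ZMod N) :
    insert x {y | IsDyadicParent N x y} ⊆ dyadicStar N x.val := by
  rintro y (rfl | ⟨-, rfl | rfl⟩)
  · exact .inl (ZMod.natCast_zmod_val y).symm
  · exact .inr (.inl rfl)
  · exact .inr (.inr rfl)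

end ZMod

theorem sum_two_pow_lt_two_pow {kk : ℕ → ℕ} {j s : ℕ}
    (hmono : ∀ i i', i < i' → i' < j → kk i < kk i') (hs : ∀ i < j, kk i < s) :
    ∑ i ∈ range j, 2 ^ kk i < 2 ^ s := by
  induction j generalizing s with
  | zero => simp
  | succ j ih =>
    have hlt := ih (fun i i' h h' => hmono i i' h (by omega)) fun i hi => hmono i j hi (by omega)
    calc ∑ i ∈ range (j + 1), 2 ^ kk i < 2 ^ kk j + 2 ^ kk j := by
          rw [sum_range_succ]; omega
      _ = 2 ^ (kk j + 1) := by ring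
      _ ≤ 2 ^ s := Nat.pow_le_pow_right (by norm_num) (hs j (by omega))

section Binary

variable {N l k : ℕ} {kk : ℕ → ℕ}

theorem digit_mono (hmono : ∀ i j, i < j → j < l → kk i < kk j) {i j : ℕ} (hij : i ≤ j)
    (hj : j < l) : kk i ≤ kk j :=
  hij.eq_or_lt.elim (fun h => h ▸ le_rfl) fun h => (hmono i j h hj).le

theorem numDigits_le_succ (hmono : ∀ i j, i < j → j < l → kk i < kk j)
    (hsum : N = ∑ j ∈ range l, 2 ^ kk j) (hkmax : ∀ k', 2 ^ k' < N → k' ≤ k) :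
    l ≤ k + 1 := by
  by_contra! hl
  have hid : ∀ i < l, i ≤ kk i := by
    intro i hi
    induction i with
    | zero => omega
    | succ i ih => have := hmono i (i + 1) (by omega) hi; have := ih (by omega); omega
  have hpair : 2 ^ kk 0 + 2 ^ kk (k + 1) ≤ N := by
    rw [hsum, ← sum_pair (f := fun j => 2 ^ kk j) (by omega : 0 ≠ k + 1)]
    exact sum_le_sum_of_subset (by
      intro i hi
      rw [mem_insert, mem_singleton] at hi
      rw [mem_range]
      omega)
  have := hkmax (kk (k + 1)) (by have := Nat.one_le_two_pow (n := kk 0); omega)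
  have := hid (k + 1) hl
  omega

theorem mod_two_pow_eq_partialSum (hmono : ∀ i j, i < j → j < l → kk i < kk j)
    (hsum : N = ∑ j ∈ range l, 2 ^ kk j) {j s : ℕ} (hjl : j ≤ l)
    (hlow : ∀ i < j, kk i < s) (hhigh : ∀ i ∈ Ico j l, s ≤ kk i) :
    N % 2 ^ s = ∑ i ∈ range j, 2 ^ kk i := by
  obtain ⟨c, hc⟩ : 2 ^ s ∣ ∑ i ∈ Ico j l, 2 ^ kk i :=
    dvd_sum fun i hi => pow_dvd_pow 2 (hhigh i hi)
  rw [hsum, ← sum_range_add_sum_Ico _ hjl, hc, Nat.add_mul_mod_self_left, Nat.mod_eq_of_lt]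
  exact sum_two_pow_lt_two_pow (fun i i' h h' => hmono i i' h (by omega)) hlow

/-- With `s = padicValNat 2 n`, `N - n` is `N % 2 ^ s`, the sum of the binary digits of `N` below
`s`. It is not the sum of all digits but the top one, since then `n` would be the top power of two,
contradicting `2 ^ (s + 1) < N`. -/
theorem exists_sub_eq_partialSum (hmono : ∀ i j, i < j → j < l → kk i < kk j)
    (hsum : N = ∑ j ∈ range l, 2 ^ kk j) {n : ℕ} (hnN : n < N)
    (hNn : N < n + 2 ^ padicValNat 2 n) (hs : 2 ^ (padicValNat 2 n + 1) < N) :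
    ∃ i ∈ Icc 1 (l - 2), N - n = ∑ j ∈ range i, 2 ^ kk j := by
  set s := padicValNat 2 n
  have hex : ∃ j, l ≤ j ∨ s ≤ kk j := ⟨l, .inl le_rfl⟩
  set j := Nat.find hex
  have hjl : j ≤ l := Nat.find_min' hex (.inl le_rfl)
  have hmod := mod_two_pow_eq_partialSum hmono hsum (s := s) hjl (fun i hi => by
    have := Nat.find_min hex hi; omega) fun i hi => by
    rw [mem_Ico] at hi
    rcases Nat.find_spec hex with h | h
    · omega
    · exact h.trans (digit_mono hmono hi.1 hi.2)
  obtain ⟨d, hd⟩ : 2 ^ s ∣ n := pow_padicValNat_dvd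
  have heq : N - n = ∑ i ∈ range j, 2 ^ kk i := by
    rw [← hmod, show N = N - n + 2 ^ s * d by omega, Nat.add_mul_mod_self_left,
      Nat.mod_eq_of_lt (by omega)]
    omega
  refine ⟨j, mem_Icc.mpr ⟨Nat.one_le_iff_ne_zero.mpr fun hj0 => ?_, ?_⟩, heq⟩
  · rw [hj0, sum_range_zero] at heq; omega
  · by_contra! hj
    have hl : l = j + 1 := by
      rcases (show j = l ∨ l = j + 1 by omega) with h | h
      · rw [h, ← hsum] at heq; omega
      · exact h
    have hN : N = ∑ i ∈ range j, 2 ^ kk i + 2 ^ kk j := by rw [hsum, hl, sum_range_succ]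
    have hnj : n = 2 ^ kk j := by omega
    have hsj : s = kk j := by simp only [s, hnj, padicValNat.prime_pow]
    have hNlt : N < 2 ^ (kk j + 1) := hsum ▸ sum_two_pow_lt_two_pow hmono fun i hi =>
      Nat.lt_succ_of_le (digit_mono hmono (by omega) (by omega))
    rw [← hsj] at hNlt
    omega

def freqSet (N l k : ℕ) (kk : ℕ → ℕ) : Finset (ZMod N) :=
  {(0 : ZMod N)} ∪
    (Finset.range k).image (fun i => (((2 : ℤ) ^ i : ℤ) : ZMod N)) ∪
    (Finset.range k).image (fun i => ((-((2 : ℤ) ^ i) : ℤ) : ZMod N)) ∪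
    (Finset.Icc 1 (l - 2)).image
      (fun i => ((∑ j ∈ Finset.range i, 2 ^ kk j : ℕ) : ZMod N))

theorem card_freqSet_le : (freqSet N l k kk).card ≤ 1 + k + k + (l - 2) := by
  refine (card_union_le _ _).trans (add_le_add ((card_union_le _ _).trans (add_le_add
    ((card_union_le _ _).trans (add_le_add (card_singleton _).le card_image_le)) card_image_le))
    card_image_le) |>.trans ?_
  simp

theorem zero_mem_freqSet : (0 : ZMod N) ∈ freqSet N l k kk := by simp [freqSet]

theorem two_pow_mem_freqSet {i : ℕ} (hi : i < k) : (2 : ZMod N) ^ i ∈ freqSet N l k kk := by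
  simp only [freqSet, mem_union, mem_image, mem_range]
  exact .inl (.inl (.inr ⟨i, hi, by push_cast; rfl⟩))

theorem neg_two_pow_mem_freqSet {i : ℕ} (hi : i < k) :
    -(2 : ZMod N) ^ i ∈ freqSet N l k kk := by
  simp only [freqSet, mem_union, mem_image, mem_range]
  exact .inl (.inr ⟨i, hi, by push_cast; rfl⟩)

theorem partialSum_mem_freqSet {i : ℕ} (hi : i ∈ Icc 1 (l - 2)) :
    ((∑ j ∈ range i, 2 ^ kk j : ℕ) : ZMod N) ∈ freqSet N l k kk := by
  simp only [freqSet, mem_union, mem_image]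
  exact .inr ⟨i, hi, rfl⟩

theorem image_add_dyadicStar_subset_iff {t : ZMod N} {n : ℕ} {T : Set (ZMod N)} :
    (fun c => t + c) '' dyadicStar N n ⊆ T ↔
      t + n ∈ T ∧ t + lowerParent n ∈ T ∧ t + upperParent N n ∈ T := by
  simp only [dyadicStar, Set.image_insert_eq, Set.image_singleton, Set.insert_subset_iff,
    Set.singleton_subset_iff]

theorem natCast_lowerParent {n : ℕ} (hn : n ≠ 0) :
    (lowerParent n : ZMod N) = n - 2 ^ padicValNat 2 n := by
  rw [lowerParent, Nat.cast_sub (Nat.le_of_dvd (Nat.pos_of_ne_zero hn) pow_padicValNat_dvd),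
    Nat.cast_pow, Nat.cast_ofNat]

theorem image_neg_add_dyadicStar_subset_freqSet (hmono : ∀ i j, i < j → j < l → kk i < kk j)
    (hsum : N = ∑ j ∈ range l, 2 ^ kk j) (hk : 2 ^ k < N) {n : ℕ} (hn : n ≠ 0) (hnN : n < N)
    (hsk : padicValNat 2 n < k) :
    (fun c => -(n : ZMod N) + c) '' dyadicStar N n ⊆ freqSet N l k kk := by
  rw [image_add_dyadicStar_subset_iff, natCast_lowerParent hn, neg_add_cancel, sub_eq_add_neg,
    neg_add_cancel_left]
  refine ⟨zero_mem_freqSet, neg_two_pow_mem_freqSet hsk, ?_⟩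
  rcases le_or_gt (n + 2 ^ padicValNat 2 n) N with hb | hb
  · rw [upperParent, min_eq_left hb, Nat.cast_add, Nat.cast_pow, Nat.cast_ofNat,
      neg_add_cancel_left]
    exact two_pow_mem_freqSet hsk
  · obtain ⟨i, hi, heq⟩ := exists_sub_eq_partialSum hmono hsum hnN hb
      ((Nat.pow_le_pow_right (by norm_num) hsk).trans_lt hk)
    rw [upperParent, min_eq_right hb.le, ZMod.natCast_self, add_zero, ← zero_sub,
      ← ZMod.natCast_self N, ← Nat.cast_sub hnN.le, heq]
    exact partialSum_mem_freqSet hi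

theorem image_neg_two_pow_add_dyadicStar_subset_freqSet {k' : ℕ} (hN : N ≤ 2 ^ (k' + 2)) :
    (fun c => -(2 : ZMod N) ^ k' + c) '' dyadicStar N (2 ^ (k' + 1)) ⊆
      freqSet N l (k' + 1) kk := by
  rw [image_add_dyadicStar_subset_iff, lowerParent, upperParent, padicValNat.prime_pow,
    Nat.sub_self, min_eq_right (by rw [← two_mul, ← pow_succ']; exact hN), ZMod.natCast_self,
    Nat.cast_zero, add_zero, Nat.cast_pow, Nat.cast_ofNat, pow_succ, mul_two, neg_add_cancel_left]
  exact ⟨two_pow_mem_freqSet k'.lt_succ_self, neg_two_pow_mem_freqSet k'.lt_succ_self,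
    neg_two_pow_mem_freqSet k'.lt_succ_self⟩

theorem exists_image_add_dyadicStar_subset_freqSet (hN : 2 < N)
    (hmono : ∀ i j, i < j → j < l → kk i < kk j) (hsum : N = ∑ j ∈ range l, 2 ^ kk j)
    (hk : 2 ^ k < N) (hkmax : ∀ k', 2 ^ k' < N → k' ≤ k) {n : ℕ} (hn : n ≠ 0)
    (hnN : n < N) :
    ∃ t : ZMod N, (fun c => t + c) '' dyadicStar N n ⊆ freqSet N l k kk := by
  rcases lt_or_ge (padicValNat 2 n) k with hsk | hsk
  · exact ⟨_, image_neg_add_dyadicStar_subset_freqSet hmono hsum hk hn hnN hsk⟩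
  · have hNk : N ≤ 2 ^ (k + 1) := not_lt.mp fun h => by have := hkmax _ h; omega
    obtain ⟨d, hd⟩ : 2 ^ k ∣ n := (pow_dvd_pow 2 hsk).trans pow_padicValNat_dvd
    have hd1 : d = 1 := by
      have : d < 2 := Nat.lt_of_mul_lt_mul_left (a := 2 ^ k) (by rw [← hd, ← pow_succ]; omega)
      have : d ≠ 0 := by rintro rfl; exact hn hd
      omega
    obtain ⟨k', rfl⟩ : ∃ k', k = k' + 1 := ⟨k - 1, by have := hkmax 1 (by omega); omega⟩
    rw [hd, hd1, mul_one]
    exact ⟨_, image_neg_two_pow_add_dyadicStar_subset_freqSet hNk⟩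

theorem exists_translate_subset_freqSet [NeZero N] (hN : 2 < N)
    (hmono : ∀ i j, i < j → j < l → kk i < kk j) (hsum : N = ∑ j ∈ range l, 2 ^ kk j)
    (hk : 2 ^ k < N) (hkmax : ∀ k', 2 ^ k' < N → k' ≤ k) (x : ZMod N) :
    ∃ t : ZMod N,
      (fun c => t + c) '' insert x {y | IsDyadicParent N x y} ⊆ freqSet N l k kk := by
  by_cases hx : x = 0
  · refine ⟨0, ?_⟩
    rintro _ ⟨y, hy | ⟨hx', -⟩, rfl⟩
    · simpa [hy, hx] using zero_mem_freqSet
    · exact absurd hx hx'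
  · obtain ⟨t, ht⟩ := exists_image_add_dyadicStar_subset_freqSet hN hmono hsum hk hkmax
      ((ZMod.val_ne_zero x).mpr hx) (ZMod.val_lt x)
    exact ⟨t, (Set.image_mono (insert_setOf_isDyadicParent_subset_dyadicStar x)).trans ht⟩

end Binary

end CycleTriangulation

/-- **Theorem 6: triangulation of the `N`-cycle with `≤ 3 log₂ N` frequencies.** Write
`N = Σ_{j=1}^l 2^{k_j}` with `k_1 < … < k_l` (binary expansion; here `kk j = k_{j+1}`)
and let `k` be the largest integer with `2^k < N`. Then the set `T`, the image mod `N`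
of `{0} ∪ {±2^i : 0 ≤ i ≤ k−1} ∪ {Σ_{j=1}^i 2^{k_j} : 1 ≤ i ≤ l−2}`, has at most
`3 log₂ N` elements, and the cycle graph `C_N` has a chordal cover all of whose maximal
cliques have a translate contained in `T`. -/
theorem cycle_triangulation
    (N : ℕ) (hN : 2 < N)
    (l : ℕ) (kk : ℕ → ℕ)
    (hmono : ∀ i j, i < j → j < l → kk i < kk j)
    (hsum : N = ∑ j ∈ Finset.range l, 2 ^ kk j)
    (k : ℕ) (hk : 2 ^ k < N) (hkmax : ∀ k', 2 ^ k' < N → k' ≤ k) :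
    let T : Finset (ZMod N) :=
      {(0 : ZMod N)} ∪
        (Finset.range k).image (fun i => (((2 : ℤ) ^ i : ℤ) : ZMod N)) ∪
        (Finset.range k).image (fun i => ((-((2 : ℤ) ^ i) : ℤ) : ZMod N)) ∪
        (Finset.Icc 1 (l - 2)).image
          (fun i => ((∑ j ∈ Finset.range i, 2 ^ kk j : ℕ) : ZMod N))
    (T.card : ℝ) ≤ 3 * Real.logb 2 (N : ℝ) ∧
    ∃ Γ : SimpleGraph (ZMod N),
      IsChordal Γ ∧
      (SimpleGraph.fromRel fun i j : ZMod N => i - j = 1) ≤ Γ ∧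
      ∀ C : Set (ZMod N), Γ.IsClique C →
        (∀ C', Γ.IsClique C' → C ⊆ C' → C' = C) →
        ∃ t : ZMod N, (fun c => t + c) '' C ⊆ ↑T := by
  intro T
  have : NeZero N := ⟨by omega⟩
  refine ⟨?_, SimpleGraph.fromRel (CycleTriangulation.IsDyadicParent N),
    SimpleGraph.isChordal_fromRel _ CycleTriangulation.dyadicRank_lt
      fun _ _ _ => CycleTriangulation.isDyadicParent_or_of_ne,
    CycleTriangulation.fromRel_sub_eq_one_le (by omega), fun C hC _ => ?_⟩
  · have hcard : T.card ≤ 3 * k := CycleTriangulation.card_freqSet_le.trans (by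
      have := CycleTriangulation.numDigits_le_succ hmono hsum hkmax
      have := hkmax 1 (by omega)
      omega)
    have hlog : (k : ℝ) ≤ Real.logb 2 N := by
      rw [Real.le_logb_iff_rpow_le (by norm_num) (by positivity), Real.rpow_natCast]
      exact_mod_cast hk.le
    calc (T.card : ℝ) ≤ 3 * k := by exact_mod_cast hcard
      _ ≤ 3 * Real.logb 2 N := by gcongr
  · rcases C.eq_empty_or_nonempty with rfl | hne
    · exact ⟨0, by simp⟩
    obtain ⟨v, -, hCv⟩ :=
      SimpleGraph.exists_mem_subset_insert_of_isClique_fromRel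
        CycleTriangulation.dyadicRank_lt hC C.toFinite hne
    obtain ⟨t, ht⟩ :=
      CycleTriangulation.exists_translate_subset_freqSet hN hmono hsum hk hkmax v
    exact ⟨t, (Set.image_mono hCv).trans ht⟩
end

section
/- Let N and d be positive integers with d dividing N. The map φ : ℤ_{N/d} × {0,…,d−1} → ℤ_N defined by φ(q,r) = q·d + r (where q·d is computed from any integer lift of q) is a well-defined bijection. Moreover, if i, i' ∈ ℤ_N are adjacent in the d-th power C_N^d of the cycle graph (i.e. i ≠ i' and i − i' lies in the image of {±1, ±2, …, ±d} in ℤ_N), and i = φ(q,r), i' = φ(q',r'), then q − q' lies in {−1, 0, 1} in ℤ_{N/d}; that is, under the identification φ, the graph C_N^d is a subgraph of the strong product C_{N/d} ⊠ K_d. -/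
/-!
Bijectivity of `φ` is uniqueness of division with remainder by `d`, plus a cardinality count.
For adjacency, lift `φ(q,r) - φ(q',r') = m` to `ℤ`: `(q - q')·d + (r - r') - m` is a multiple of
`N = (N/d)·d`, so `d·x = m + (r' - r)` for some integer `x ≡ q - q'` modulo `N/d`. As `|m| ≤ d` and
`|r' - r| < d`, this forces `|x| < 2`.
-/

/-- The identification `φ : ℤ_{N/d} × {0,…,d−1} → ℤ_N`, `φ(q,r) = q·d + r`. -/
def cyclePhi (N d : ℕ) (p : ZMod (N / d) × Fin d) : ZMod N :=
  ((p.1.val * d + p.2.val : ℕ) : ZMod N)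

theorem Nat.mul_add_lt_mul {n d q r : ℕ} (hq : q < n) (hr : r < d) : q * d + r < n * d :=
  calc q * d + r < (q + 1) * d := by rw [add_one_mul]; omega
    _ ≤ n * d := Nat.mul_le_mul_right d hq

theorem Nat.eq_and_eq_of_mul_add_eq_mul_add {d q q' r r' : ℕ} (hr : r < d) (hr' : r' < d)
    (h : q * d + r = q' * d + r') : q = q' ∧ r = r' := by
  have hd : 0 < d := by omega
  have hdiv := congrArg (· / d) h
  have hmod := congrArg (· % d) h
  simp only [add_comm _ r, add_comm _ r', Nat.add_mul_div_right _ _ hd,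
    Nat.div_eq_of_lt hr, Nat.div_eq_of_lt hr', Nat.add_mul_mod_self_right,
    Nat.mod_eq_of_lt hr, Nat.mod_eq_of_lt hr'] at hdiv hmod
  omega

theorem Int.abs_le_one_of_mul_eq_add {d x m s : ℤ} (hm : |m| ≤ d) (hs : |s| < d)
    (h : d * x = m + s) : |x| ≤ 1 := by
  have hd : 0 < d := lt_of_le_of_lt (abs_nonneg s) hs
  have hlt : d * |x| < d * 2 :=
    calc d * |x| = |m + s| := by rw [← h, abs_mul, abs_of_pos hd]
      _ ≤ |m| + |s| := abs_add_le m s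
      _ < d * 2 := by linarith
  have hx : |x| < 2 := lt_of_mul_lt_mul_left hlt hd.le
  omega

section CyclePhi

variable {N d : ℕ}

theorem neZero_div_of_dvd (hN : 0 < N) (hdvd : d ∣ N) : NeZero (N / d) :=
  ⟨(Nat.div_pos (Nat.le_of_dvd hN hdvd) (Nat.pos_of_dvd_of_pos hdvd hN)).ne'⟩

theorem val_mul_add_val_lt (hN : 0 < N) (hdvd : d ∣ N) (q : ZMod (N / d)) (r : Fin d) :
    q.val * d + r.val < N := by
  have := neZero_div_of_dvd hN hdvd
  simpa only [Nat.div_mul_cancel hdvd] using Nat.mul_add_lt_mul q.val_lt r.isLt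

theorem cyclePhi_injective (hN : 0 < N) (hdvd : d ∣ N) : Function.Injective (cyclePhi N d) := by
  have := neZero_div_of_dvd hN hdvd
  rintro ⟨q, r⟩ ⟨q', r'⟩ h
  have hnat : q.val * d + r.val = q'.val * d + r'.val := by
    have := (ZMod.natCast_eq_natCast_iff' _ _ _).mp h
    rwa [Nat.mod_eq_of_lt (val_mul_add_val_lt hN hdvd q r),
      Nat.mod_eq_of_lt (val_mul_add_val_lt hN hdvd q' r')] at this
  obtain ⟨hq, hr⟩ := Nat.eq_and_eq_of_mul_add_eq_mul_add r.isLt r'.isLt hnat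
  exact Prod.ext (ZMod.val_injective _ hq) (Fin.ext hr)

theorem cyclePhi_bijective (hN : 0 < N) (hdvd : d ∣ N) : Function.Bijective (cyclePhi N d) := by
  have := neZero_div_of_dvd hN hdvd
  have : NeZero N := ⟨hN.ne'⟩
  refine (Fintype.bijective_iff_injective_and_card _).mpr ⟨cyclePhi_injective hN hdvd, ?_⟩
  simp [ZMod.card, Nat.div_mul_cancel hdvd]

theorem exists_mul_eq_of_cyclePhi_sub_eq_intCast (hN : 0 < N) (hdvd : d ∣ N)
    {q q' : ZMod (N / d)} {r r' : Fin d} {m : ℤ} (h : cyclePhi N d (q, r) - cyclePhi N d (q', r') = (m : ZMod N)) :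
    ∃ x : ℤ, (d : ℤ) * x = m + ((r'.val : ℤ) - r.val) ∧ q - q' = (x : ZMod (N / d)) := by
  have := neZero_div_of_dvd hN hdvd
  have hdvdN : (N : ℤ) ∣ (q.val * d + r.val : ℤ) - (q'.val * d + r'.val : ℤ) - m := by
    apply (ZMod.intCast_zmod_eq_zero_iff_dvd _ _).mp
    push_cast [cyclePhi] at h ⊢
    linear_combination h
  obtain ⟨k, hk⟩ := hdvdN
  have hNd : (N : ℤ) = (N / d : ℕ) * d := by exact_mod_cast (Nat.div_mul_cancel hdvd).symm
  refine ⟨q.val - q'.val - (N / d : ℕ) * k, by rw [hNd] at hk; linear_combination hk, ?_⟩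
  simp only [Int.cast_sub, Int.cast_mul, Int.cast_natCast, ZMod.natCast_self, zero_mul, sub_zero,
    ZMod.natCast_zmod_val]

end CyclePhi

theorem cycle_power_subgraph_strong_product_general
    (N d : ℕ) (hN : 0 < N) (hdvd : d ∣ N) :
    Function.Bijective (cyclePhi N d) ∧
    ∀ (q q' : ZMod (N / d)) (r r' : Fin d),
      cyclePhi N d (q, r) ≠ cyclePhi N d (q', r') →
      (∃ m : ℤ, 1 ≤ |m| ∧ |m| ≤ (d : ℤ) ∧
        cyclePhi N d (q, r) - cyclePhi N d (q', r') = (m : ZMod N)) →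
      (q - q' = 0 ∨ q - q' = 1 ∨ q - q' = -1) := by
  refine ⟨cyclePhi_bijective hN hdvd, ?_⟩
  rintro q q' r r' - ⟨m, -, hm, hsub⟩
  obtain ⟨x, hx, hq⟩ := exists_mul_eq_of_cyclePhi_sub_eq_intCast hN hdvd hsub
  have hr : |(r'.val : ℤ) - r.val| < d := by
    have := r.isLt; have := r'.isLt
    rw [abs_lt]; omega
  rcases Int.abs_le_one_iff.mp (Int.abs_le_one_of_mul_eq_add hm hr hx) with rfl | rfl | rfl <;>
    simp [hq]

/-- **The `d`-th power of the `N`-cycle embeds in `C_{N/d} ⊠ K_d`.** If `d ∣ N`, the map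
`φ(q,r) = q·d + r` is a bijection `ℤ_{N/d} × {0,…,d−1} → ℤ_N`, and whenever
`φ(q,r), φ(q',r')` are adjacent in the `d`-th power of the cycle graph `C_N` (i.e. they
are distinct and their difference is the image of some integer `m` with `1 ≤ |m| ≤ d`),
one has `q − q' ∈ {−1, 0, 1}` in `ℤ_{N/d}`; that is, under `φ` the graph `C_N^d` is a
subgraph of the strong product `C_{N/d} ⊠ K_d`. -/
theorem cycle_power_subgraph_strong_product
    (N d : ℕ) (hd : 0 < d) (hN : 0 < N) (hdvd : d ∣ N) :
    Function.Bijective (cyclePhi N d) ∧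
    ∀ (q q' : ZMod (N / d)) (r r' : Fin d),
      cyclePhi N d (q, r) ≠ cyclePhi N d (q', r') →
      (∃ m : ℤ, 1 ≤ |m| ∧ |m| ≤ (d : ℤ) ∧
        cyclePhi N d (q, r) - cyclePhi N d (q', r') = (m : ZMod N)) →
      (q - q' = 0 ∨ q - q' = 1 ∨ q - q' = -1) :=
  cycle_power_subgraph_strong_product_general N d hN hdvd
end

section
/- Let Gr = (V,E) be a simple graph and let d ≥ 1 be an integer, and let Gr ⊠ K_d denote the strong product of Gr with the complete graph K_d on {0,…,d−1}. Then: (1) if Gr' = (V,E') satisfies E ⊆ E', then every edge of Gr ⊠ K_d is an edge of Gr' ⊠ K_d; (2) if Gr is chordal then Gr ⊠ K_d is chordal; and (3) every maximal clique of Gr ⊠ K_d is of the form C × {0,…,d−1} for some maximal clique C of Gr. -/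
open scoped Classical

/-- The strong product `Gr ⊠ K_d` of a graph `Gr` with the complete graph on
`{0,…,d−1}`: distinct vertices `(u,a)` and `(v,b)` are adjacent iff `u = v` or
`u` and `v` are adjacent in `Gr`. -/
def strongProdK {V : Type*} (Gr : SimpleGraph V) (d : ℕ) : SimpleGraph (V × Fin d) :=
  SimpleGraph.fromRel fun p q => p.1 = q.1 ∨ Gr.Adj p.1 q.1

/-!
Monotonicity and the description of maximal cliques follow from the fact that a set of vertices
is a clique of `Gr ⊠ K_d` iff its projection to `V` is a clique of `Gr`.

For chordality, take a chordless cycle of length at least 4 in `Gr ⊠ K_d`. If its vertices have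
pairwise distinct projections, the subgraph induced on them embeds as an induced subgraph of `Gr`,
so the projected cycle has a chord, which lifts. Otherwise two vertices `x`, `y` of the cycle have
the same projection; they are adjacent twins, so `xy` is an edge of the cycle, and the vertex
following `y` is adjacent to `x` as well: a chord, because the cycle has length at least 4.
-/

lemma isChordal_iff_forall_not_isChordless {V : Type*} {G : SimpleGraph V} : IsChordal G ↔
    ∀ ⦃u : V⦄ (c : G.Walk u u), c.IsCycle → 4 ≤ c.length → ¬ c.IsChordless := by
  simp [IsChordal, SimpleGraph.Walk.isChordless_iff_forall_mem_edges]

namespace SimpleGraph.Walk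

variable {V W : Type*} {G : SimpleGraph V} {H : SimpleGraph W} {u v w : V}

lemma IsChordless.rotate {c : G.Walk v v} (hc : c.IsChordless) (hu : u ∈ c.support) :
    (c.rotate u hu).IsChordless := by
  rwa [← isInduced_toSubgraph, toSubgraph_rotate, isInduced_toSubgraph]

lemma IsChordless.reverse {p : G.Walk u v} (hp : p.IsChordless) : p.reverse.IsChordless := by
  rwa [← isInduced_toSubgraph, toSubgraph_reverse, isInduced_toSubgraph]

lemma isChordless_map_iff (f : H ↪g G) {a b : W} (p : H.Walk a b) :
    (p.map f.toHom).IsChordless ↔ p.IsChordless := by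
  have hedge (x y : W) : s(f x, f y) ∈ (p.map f.toHom).edges ↔ s(x, y) ∈ p.edges := by
    rw [edges_map, ← List.mem_map_of_injective (Sym2.map.injective f.injective)]
    rfl
  simp only [isChordless_iff_forall_mem_edges, support_map, List.mem_map]
  constructor
  · intro h x y hx hy hxy
    exact (hedge x y).mp (h ⟨x, hx, rfl⟩ ⟨y, hy, rfl⟩ (f.map_adj_iff.mpr hxy))
  · rintro h _ _ ⟨x, hx, rfl⟩ ⟨y, hy, rfl⟩ hxy
    exact (hedge x y).mpr (h hx hy (f.map_adj_iff.mp hxy))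

lemma IsCycle.not_adj_getVert_two {c : G.Walk u u} (hc : c.IsCycle) (hlen : 4 ≤ c.length)
    (hcl : c.IsChordless) : ¬ G.Adj u (c.getVert 2) := by
  intro hadj
  have hmem : c.getVert 2 ∈ c.toSubgraph.neighborSet u :=
    adj_toSubgraph_iff_mem_edges.mpr
      (hcl.mem_edges c.start_mem_support (c.getVert_mem_support 2) hadj)
  rw [hc.neighborSet_toSubgraph_endpoint] at hmem
  rcases hmem with h | h
  · have := hc.getVert_injOn (by simp only [Set.mem_ofPred_eq]; omega)
      (by simp only [Set.mem_ofPred_eq]; omega) h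
    omega
  · have := hc.getVert_injOn' (by simp only [Set.mem_ofPred_eq]; omega)
      (by simp only [Set.mem_ofPred_eq]; omega) h
    omega

lemma IsCycle.not_isChordless_of_adj_twin {c : G.Walk u u} (hc : c.IsCycle)
    (hlen : 4 ≤ c.length) (hv : v ∈ c.support) (hw : w ∈ c.support) (hvw : G.Adj v w)
    (htwin : ∀ z, G.Adj w z → z ≠ v → G.Adj v z) : ¬ c.IsChordless := by
  intro hcl
  obtain ⟨c', hc', hlen', hcl', hsnd⟩ : ∃ c' : G.Walk v v, c'.IsCycle ∧ 4 ≤ c'.length ∧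
      c'.IsChordless ∧ c'.snd = w := by
    have hc₁ := hc.rotate hv
    have hcl₁ := hcl.rotate hv
    have hw₁ : w ∈ (c.rotate v hv).toSubgraph.neighborSet v :=
      adj_toSubgraph_iff_mem_edges.mpr <| hcl₁.mem_edges (c.rotate v hv).start_mem_support
        ((c.mem_support_rotate_iff v hv).mpr hw) hvw
    rw [hc₁.neighborSet_toSubgraph_endpoint] at hw₁
    rcases hw₁ with h | h
    · exact ⟨_, hc₁, by simpa using hlen, hcl₁, h.symm⟩
    · exact ⟨_, hc₁.reverse, by simpa using hlen, hcl₁.reverse, by rw [snd_reverse, h]⟩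
  have hadj : G.Adj w (c'.getVert 2) := hsnd ▸ c'.adj_getVert_succ (by omega : 1 < c'.length)
  have hne : c'.getVert 2 ≠ v := by
    rw [ne_eq, hc'.getVert_endpoint_iff (by omega)]
    omega
  exact hc'.not_adj_getVert_two hlen' hcl' (htwin _ hadj hne)

lemma IsCycle.not_isChordless_of_isChordal_induce {c : G.Walk u u}
    (hc : c.IsCycle) (hlen : 4 ≤ c.length) (S : Set V) (hS : ∀ x ∈ c.support, x ∈ S)
    (hchordal : IsChordal (G.induce S)) : ¬ c.IsChordless := by
  intro hcl
  have hcycle : (c.induce S hS).IsCycle :=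
    IsCycle.of_map (f := (Embedding.induce S).toHom) (by rwa [map_induce])
  have hlen' : 4 ≤ (c.induce S hS).length := by
    rwa [← length_map (Embedding.induce S).toHom, map_induce]
  refine isChordal_iff_forall_not_isChordless.mp hchordal _ hcycle hlen' ?_
  rw [← isChordless_map_iff (Embedding.induce S)]
  rwa [map_induce]

end SimpleGraph.Walk

lemma IsChordal.of_embedding {V W : Type*} {G : SimpleGraph V} {H : SimpleGraph W} (f : H ↪g G)
    (hG : IsChordal G) : IsChordal H := by
  rw [isChordal_iff_forall_not_isChordless] at hG ⊢
  intro u c hc hlen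
  rw [← SimpleGraph.Walk.isChordless_map_iff f]
  exact hG _ (hc.map f.injective) (by rwa [SimpleGraph.Walk.length_map])

section StrongProduct

variable {V : Type*} {Gr : SimpleGraph V} {d : ℕ}

lemma strongProdK_adj {x y : V × Fin d} :
    (strongProdK Gr d).Adj x y ↔ x ≠ y ∧ (x.1 = y.1 ∨ Gr.Adj x.1 y.1) := by
  simp only [strongProdK, SimpleGraph.fromRel_adj, Gr.adj_comm y.1, eq_comm (a := y.1), or_self]

lemma strongProdK_mono {Gr' : SimpleGraph V} (h : Gr ≤ Gr') :
    strongProdK Gr d ≤ strongProdK Gr' d := fun _ _ hxy => by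
  rw [strongProdK_adj] at hxy ⊢
  exact ⟨hxy.1, hxy.2.imp_right (@h _ _)⟩

def strongProdKInduceEmbedding {S : Set (V × Fin d)} (hS : S.InjOn Prod.fst) :
    (strongProdK Gr d).induce S ↪g Gr where
  toFun x := x.1.1
  inj' x y h := Subtype.ext (hS x.2 y.2 h)
  map_rel_iff' {x y} := by
    simp only [SimpleGraph.comap_adj, Function.Embedding.subtype_apply, strongProdK_adj]
    constructor
    · intro h
      exact ⟨fun e => h.ne (congrArg Prod.fst e), Or.inr h⟩
    · rintro ⟨hne, hfst | hadj⟩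
      · exact absurd (hS x.2 y.2 hfst) hne
      · exact hadj

lemma isChordal_strongProdK (h : IsChordal Gr) : IsChordal (strongProdK Gr d) := by
  rw [isChordal_iff_forall_not_isChordless]
  intro u c hc hlen
  by_cases hinj : Set.InjOn Prod.fst {x | x ∈ c.support}
  · exact hc.not_isChordless_of_isChordal_induce hlen _ (fun _ => id)
      (h.of_embedding (strongProdKInduceEmbedding hinj))
  · simp only [Set.InjOn, not_forall] at hinj
    obtain ⟨x, hx, y, hy, hfst, hne⟩ := hinj
    refine hc.not_isChordless_of_adj_twin hlen hx hy (strongProdK_adj.mpr ⟨hne, .inl hfst⟩) ?_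
    intro z hyz hzx
    rw [strongProdK_adj, ← hfst] at hyz
    exact strongProdK_adj.mpr ⟨Ne.symm hzx, hyz.2⟩

lemma isClique_strongProdK_iff {S : Set (V × Fin d)} :
    (strongProdK Gr d).IsClique S ↔ Gr.IsClique (Prod.fst '' S) := by
  constructor
  · rintro h _ ⟨x, hx, rfl⟩ _ ⟨y, hy, rfl⟩ hne
    exact (strongProdK_adj.mp (h hx hy (fun e => hne (e ▸ rfl)))).2.resolve_left hne
  · intro h x hx y hy hne
    exact strongProdK_adj.mpr ⟨hne, or_iff_not_imp_left.mpr (h ⟨x, hx, rfl⟩ ⟨y, hy, rfl⟩)⟩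

lemma exists_eq_prod_univ_of_maximal_isClique_strongProdK [NeZero d] {C : Set (V × Fin d)}
    (hC : (strongProdK Gr d).IsClique C)
    (hmax : ∀ C', (strongProdK Gr d).IsClique C' → C ⊆ C' → C' = C) :
    ∃ C₀ : Set V, Gr.IsClique C₀ ∧ (∀ C₀', Gr.IsClique C₀' → C₀ ⊆ C₀' → C₀' = C₀) ∧
      C = C₀ ×ˢ (Set.univ : Set (Fin d)) := by
  have hprod (S : Set V) (hS : Gr.IsClique S) :
      (strongProdK Gr d).IsClique (S ×ˢ (Set.univ : Set (Fin d))) :=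
    isClique_strongProdK_iff.mpr (hS.subset (Set.fst_image_prod_subset _ _))
  have hC₀ := isClique_strongProdK_iff.mp hC
  have heq : C = (Prod.fst '' C) ×ˢ Set.univ :=
    (hmax _ (hprod _ hC₀) fun p hp => ⟨⟨p, hp, rfl⟩, trivial⟩).symm
  refine ⟨_, hC₀, fun C₀' hC₀' hsub => ?_, heq⟩
  have hC' : C₀' ×ˢ Set.univ = C := by
    refine hmax _ (hprod _ hC₀') ?_
    rw [heq]
    exact Set.prod_mono hsub subset_rfl
  rw [← hC', Set.fst_image_prod _ Set.univ_nonempty]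

end StrongProduct

/-- **Proposition 8: properties of the strong product with a complete graph.**
(1) The strong product is monotone: if `Gr ≤ Gr'` then `Gr ⊠ K_d ≤ Gr' ⊠ K_d`.
(2) If `Gr` is chordal then so is `Gr ⊠ K_d`.
(3) Every maximal clique of `Gr ⊠ K_d` is of the form `C × {0,…,d−1}` for some maximal
clique `C` of `Gr`. -/
theorem strong_product_complete_props
    {V : Type*} (Gr : SimpleGraph V) (d : ℕ) (hd : 1 ≤ d) :
    (∀ Gr' : SimpleGraph V, Gr ≤ Gr' → strongProdK Gr d ≤ strongProdK Gr' d) ∧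
    (IsChordal Gr → IsChordal (strongProdK Gr d)) ∧
    (∀ C : Set (V × Fin d), (strongProdK Gr d).IsClique C →
      (∀ C', (strongProdK Gr d).IsClique C' → C ⊆ C' → C' = C) →
      ∃ C₀ : Set V, Gr.IsClique C₀ ∧
        (∀ C₀', Gr.IsClique C₀' → C₀ ⊆ C₀' → C₀' = C₀) ∧
        C = C₀ ×ˢ (Set.univ : Set (Fin d))) := by
  have : NeZero d := ⟨by omega⟩
  exact ⟨fun _ => strongProdK_mono, isChordal_strongProdK,
    fun _ => exists_eq_prod_univ_of_maximal_isClique_strongProdK⟩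
end
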